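/- arXiv:2510.22611 — 13 statements merged into one kernel-verified Lean document; each statement's English description precedes it below -/
import Mathlib

section
/- Let R be a semi-potent ring, i.e., every left ideal of R not contained in J(R) contains a nonzero idempotent. Then the following are equivalent: (1) R is a UJ# ring; (2) x^2 - x ∈ J(R) for every x ∈ R (i.e., R/J(R) is Boolean); (3) R is a UJ ring, i.e., u - 1 ∈ J(R) for every unit u of R. -/
/-- `J#(R)`: the set of elements `z` such that `z ^ n` lies in the Jacobson radical
(the intersection of the maximal left ideals) for some `n ≥ 1`. -/
def Jsharp (R : Type*) [Ring R] : Set R :=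
  {z : R | ∃ n : ℕ, 1 ≤ n ∧ z ^ n ∈ Ideal.jacobson (⊥ : Ideal R)}

/-- A ring is a `UJ#` ring if `u - 1 ∈ J#(R)` for every unit `u`. -/
def IsUJsharp (R : Type*) [Ring R] : Prop :=
  ∀ u : Rˣ, ((u : R) - 1) ∈ Jsharp R

/-- A ring is semi-potent if every left ideal not contained in the Jacobson radical
contains a nonzero idempotent. -/
def IsSemipotent (R : Type*) [Ring R] : Prop :=
  ∀ I : Ideal R, ¬ I ≤ Ideal.jacobson (⊥ : Ideal R) →
    ∃ e ∈ I, e ≠ 0 ∧ IsIdempotentElem e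

/-!
Pass to `S = R ⧸ J(R)`: units lift along `R → S` since `1 + J(R)` consists of units, and
semi-potency says that every nonzero principal left ideal `S x` contains a nonzero idempotent.
If every unit of `S` is unipotent, then `S` is reduced: from `z² = 0 ≠ z` and an idempotent
`e = a z ≠ 0` one builds `2 × 2` matrix units, and the unit `!![1, 1; 1, 0]` of that corner is
not unipotent. In a reduced ring `UJ#` collapses to `UJ`. If all units of `S` are trivial, its
idempotents are central and `S` is Dedekind-finite; an idempotent `e = a (x² - x) ≠ 0` would
make both `x` and `x - 1` invertible in the corner `e S`, whence `e x = e = e (x - 1)`.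
-/

theorem isUnit_of_isUnit_mul_of_isUnit_mul {M : Type*} [Monoid M] {a b : M}
    (hab : IsUnit (a * b)) (hba : IsUnit (b * a)) : IsUnit a := by
  obtain ⟨u, hu⟩ := hab
  obtain ⟨v, hv⟩ := hba
  have hr : a * (b * ↑u⁻¹) = 1 := by rw [← mul_assoc, ← hu, Units.mul_inv]
  have hl : ↑v⁻¹ * b * a = 1 := by rw [mul_assoc, ← hv, Units.inv_mul]
  exact ⟨⟨a, _, hr, left_inv_eq_right_inv hl hr ▸ hl⟩, rfl⟩

section

variable {S : Type*} [Ring S]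

theorem IsIdempotentElem.eq_zero_of_mul_self_add_eq {b g : S} (hg : IsIdempotentElem g)
    (hb : IsNilpotent b) (hbg : b * b + b = g) : g = 0 := by
  refine hg.eq_zero_of_isNilpotent ?_
  rw [← hbg, ← mul_add_one]
  exact ((Commute.refl b).add_right (Commute.one_right b)).isNilpotent_mul_right hb

/- With `f = q * p`, the elements `e, p, q, f` are the matrix units `e₁₁, e₁₂, e₂₁, e₂₂` of the
corner `g = e + f`, and `b = p + q - f` is `!![0, 1; 1, -1]`, so that `b² + b = g`. -/
theorem IsIdempotentElem.eq_zero_of_matrixUnits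
    (hunits : ∀ u : Sˣ, IsNilpotent ((u : S) - 1)) {e p q : S} (he : IsIdempotentElem e)
    (hep : e * p = p) (hpe : p * e = 0) (hqe : q * e = q) (heq : e * q = 0) (hpq : p * q = e) :
    e = 0 := by
  have hpp : p * p = 0 := calc
    p * p = p * (e * p) := by rw [hep]
    _ = 0 := by rw [← mul_assoc, hpe, zero_mul]
  have hqq : q * q = 0 := calc
    q * q = q * e * q := by rw [hqe]
    _ = 0 := by rw [mul_assoc, heq, mul_zero]
  set f := q * p with hf
  have hef : e * f = 0 := by rw [hf, ← mul_assoc, heq, zero_mul]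
  have hfe : f * e = 0 := by rw [hf, mul_assoc, hpe, mul_zero]
  have hpf : p * f = p := by rw [hf, ← mul_assoc, hpq, hep]
  have hfp : f * p = 0 := by rw [hf, mul_assoc, hpp, mul_zero]
  have hqf : q * f = 0 := by rw [hf, ← mul_assoc, hqq, zero_mul]
  have hfq : f * q = q := by rw [hf, mul_assoc, hpq, hqe]
  have hff : f * f = f := by rw [hf, ← mul_assoc, mul_assoc q p q, hpq, hqe]
  set g := e + f
  set b := p + q - f
  have hgb : g * b = b := by
    simp only [g, b, mul_add, add_mul, mul_sub, hep, heq, hef, hfp, hfq, hff]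
    abel
  have hbg : b * g = b := by
    simp only [g, b, mul_add, sub_mul, add_mul, hpe, hpf, hqe, hqf, hfe, hff]
    abel
  have hbb : b * b + b = g := by
    simp only [g, b, mul_add, sub_mul, add_mul, mul_sub, hpp, hpq, hpf, ← hf, hqq, hqf, hfp,
      hfq, hff]
    abel
  have hg : IsIdempotentElem g := calc
    g * g = g * (b * b + b) := by rw [hbb]
    _ = g := by rw [mul_add, ← mul_assoc, hgb, hbb]
  have hb : IsNilpotent b := by
    have hbb' : b * b = g - b := eq_sub_of_add_eq hbb
    have hu := hunits ⟨1 + b, 1 + b - g,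
      by simp only [mul_add, mul_sub, add_mul, mul_one, one_mul, hbg, hbb']; abel,
      by simp only [sub_mul, add_mul, mul_add, mul_one, one_mul, hgb, hbb']; abel⟩
    simpa using hu
  calc e = e * g := by rw [mul_add, he.eq, hef, add_zero]
    _ = 0 := by rw [hg.eq_zero_of_mul_self_add_eq hb hbb, mul_zero]

theorem isReduced_of_isNilpotent_units_sub_one
    (hS : ∀ x : S, x ≠ 0 → ∃ a, IsIdempotentElem (a * x) ∧ a * x ≠ 0)
    (hunits : ∀ u : Sˣ, IsNilpotent ((u : S) - 1)) : IsReduced S := by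
  refine (isReduced_iff_pow_one_lt 2 one_lt_two).2 fun z hz => ?_
  by_contra hz0
  obtain ⟨a, he, he0⟩ := hS z hz0
  have hez : a * z * z = 0 := by rw [mul_assoc, ← sq, hz, mul_zero]
  refine he0 (he.eq_zero_of_matrixUnits hunits (p := a * z * a * (1 - a * z)) (q := z * (a * z))
    ?_ ?_ ?_ ?_ ?_)
  · rw [← mul_assoc, ← mul_assoc, he.eq]
  · rw [mul_assoc, he.one_sub_mul_self, mul_zero]
  · rw [mul_assoc, he.eq]
  · rw [← mul_assoc, hez, zero_mul]
  · calc a * z * a * (1 - a * z) * (z * (a * z))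
        = a * z * a * (z - a * z * z) * (a * z) := by noncomm_ring
      _ = a * z := by rw [hez, sub_zero, mul_assoc (a * z) a z, he.eq, he.eq]

theorem IsIdempotentElem.commute_of_isReduced [IsReduced S] {e : S} (he : IsIdempotentElem e)
    (a : S) : Commute e a := by
  have h₁ : e * a * (1 - e) = 0 := IsReduced.eq_zero _ ⟨2, by
    rw [sq, show e * a * (1 - e) * (e * a * (1 - e)) = e * a * ((1 - e) * e) * a * (1 - e) by
      noncomm_ring, he.one_sub_mul_self, mul_zero, zero_mul, zero_mul]⟩
  have h₂ : (1 - e) * a * e = 0 := IsReduced.eq_zero _ ⟨2, by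
    rw [sq, show (1 - e) * a * e * ((1 - e) * a * e) = (1 - e) * a * (e * (1 - e)) * a * e by
      noncomm_ring, he.mul_one_sub_self, mul_zero, zero_mul, zero_mul]⟩
  simp only [mul_sub, mul_one, sub_mul, one_mul, sub_eq_zero] at h₁ h₂
  exact h₁.trans h₂.symm

theorem isDedekindFiniteMonoid_of_isReduced [IsReduced S] : IsDedekindFiniteMonoid S where
  mul_eq_one_symm {a b} hab := by
    have hba : IsIdempotentElem (b * a) := by
      rw [IsIdempotentElem, mul_assoc, ← mul_assoc a, hab, one_mul]
    have hb : (1 - b * a) * b = 0 := by rw [sub_mul, one_mul, mul_assoc, hab, mul_one, sub_self]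
    have h : 1 - b * a = 0 := calc
      1 - b * a = (1 - b * a) * a * b := by rw [mul_assoc, hab, mul_one]
      _ = 0 := by rw [(hba.one_sub.commute_of_isReduced a).eq, mul_assoc, hb, mul_zero]
    exact (sub_eq_zero.1 h).symm

theorem IsIdempotentElem.mul_eq_self_of_mul_eq [IsReduced S] (hunits : ∀ u : Sˣ, (u : S) = 1)
    {e a y : S} (he : IsIdempotentElem e) (h : a * y = e) : e * y = e := by
  have := isDedekindFiniteMonoid_of_isReduced (S := S)
  have hvu : (1 + e * (a - 1)) * (1 + e * (y - 1)) = 1 := calc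
    _ = 1 + e * (a * y - 1) + (e * (a - 1) * e - e * (a - 1)) * (y - 1) := by noncomm_ring
    _ = 1 := by
      rw [h, mul_sub, mul_one, he.eq, sub_self, add_zero, mul_assoc,
        ← (he.commute_of_isReduced _).eq, ← mul_assoc, he.eq, sub_self, zero_mul, add_zero]
  have hu := hunits ⟨_, _, mul_eq_one_symm hvu, hvu⟩
  rw [add_eq_left, mul_sub, mul_one, sub_eq_zero] at hu
  exact hu

theorem isIdempotentElem_of_units_eq_one
    (hS : ∀ x : S, x ≠ 0 → ∃ a, IsIdempotentElem (a * x) ∧ a * x ≠ 0)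
    (hunits : ∀ u : Sˣ, (u : S) = 1) (x : S) : IsIdempotentElem x := by
  have : IsReduced S :=
    isReduced_of_isNilpotent_units_sub_one hS fun u => by rw [hunits u, sub_self]; exact .zero
  by_contra hx
  obtain ⟨a, he, he0⟩ := hS (x * x - x) (sub_ne_zero.2 hx)
  have h₁ : a * (x * x - x) * x = a * (x * x - x) :=
    he.mul_eq_self_of_mul_eq hunits (a := a * (x - 1)) (by noncomm_ring)
  have h₂ : a * (x * x - x) * (x - 1) = a * (x * x - x) :=
    he.mul_eq_self_of_mul_eq hunits (a := a * x) (by noncomm_ring)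
  rw [mul_sub, mul_one, h₁, sub_self] at h₂
  exact he0 h₂.symm

end

section Jacobson

variable {R : Type*} [Ring R]

local notation "J(" R ")" => Ideal.jacobson (⊥ : Ideal R)

theorem Ideal.isUnit_of_sub_one_mem_jacobson_bot' {r : R} (h : r - 1 ∈ J(R)) : IsUnit r := by
  obtain ⟨s, hs⟩ := Ideal.exists_mul_sub_mem_of_sub_one_mem_jacobson r h
  rw [Ideal.mem_bot, sub_eq_zero] at hs
  have hs' : s - 1 ∈ J(R) := by
    rw [show s - 1 = -(s * (r - 1)) by rw [mul_sub, hs, mul_one, neg_sub]]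
    exact neg_mem (Ideal.mul_mem_left _ s h)
  obtain ⟨t, ht⟩ := Ideal.exists_mul_sub_mem_of_sub_one_mem_jacobson s hs'
  rw [Ideal.mem_bot, sub_eq_zero] at ht
  exact ⟨⟨r, s, left_inv_eq_right_inv ht hs ▸ ht, hs⟩, rfl⟩

theorem IsIdempotentElem.eq_zero_of_mem_jacobson_bot {e : R} (he : IsIdempotentElem e)
    (hJ : e ∈ J(R)) : e = 0 :=
  (Ideal.isUnit_of_sub_one_mem_jacobson_bot' (r := 1 - e)
    (by simpa using neg_mem hJ)).mul_right_eq_zero.1 he.one_sub_mul_self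

theorem Ideal.Quotient.exists_units_mk_jacobson_bot (U : (R ⧸ J(R))ˣ) :
    ∃ u : Rˣ, Ideal.Quotient.mk J(R) u = U := by
  obtain ⟨x, hx⟩ := Ideal.Quotient.mk_surjective (U : R ⧸ J(R))
  obtain ⟨y, hy⟩ := Ideal.Quotient.mk_surjective (↑U⁻¹ : R ⧸ J(R))
  have hxy : IsUnit (x * y) := Ideal.isUnit_of_sub_one_mem_jacobson_bot' <| by
    rw [← Ideal.Quotient.eq_zero_iff_mem, map_sub, map_mul, map_one, hx, hy, U.mul_inv, sub_self]
  have hyx : IsUnit (y * x) := Ideal.isUnit_of_sub_one_mem_jacobson_bot' <| by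
    rw [← Ideal.Quotient.eq_zero_iff_mem, map_sub, map_mul, map_one, hx, hy, U.inv_mul, sub_self]
  exact ⟨(isUnit_of_isUnit_mul_of_isUnit_mul hxy hyx).unit, hx⟩

theorem IsSemipotent.exists_isIdempotentElem_mul (hR : IsSemipotent R) (x : R ⧸ J(R))
    (hx : x ≠ 0) : ∃ a, IsIdempotentElem (a * x) ∧ a * x ≠ 0 := by
  obtain ⟨x, rfl⟩ := Ideal.Quotient.mk_surjective x
  rw [Ne, Ideal.Quotient.eq_zero_iff_mem] at hx
  obtain ⟨e, heI, he0, he⟩ :=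
    hR (Ideal.span {x}) fun hle => hx (hle (Ideal.mem_span_singleton_self x))
  obtain ⟨r, rfl⟩ := Ideal.mem_span_singleton'.1 heI
  refine ⟨Ideal.Quotient.mk _ r, ?_, fun h => he0 (he.eq_zero_of_mem_jacobson_bot ?_)⟩
  · rw [← map_mul]
    exact he.map _
  · rwa [← map_mul, Ideal.Quotient.eq_zero_iff_mem] at h

theorem IsUJsharp.isNilpotent_units_sub_one (h : IsUJsharp R) (U : (R ⧸ J(R))ˣ) :
    IsNilpotent ((U : R ⧸ J(R)) - 1) := by
  obtain ⟨u, hu⟩ := Ideal.Quotient.exists_units_mk_jacobson_bot U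
  obtain ⟨n, -, hn⟩ := h u
  refine ⟨n, ?_⟩
  rwa [← hu, ← map_one (Ideal.Quotient.mk _), ← map_sub, ← map_pow,
    Ideal.Quotient.eq_zero_iff_mem]

theorem Ideal.Quotient.units_eq_one_of_forall_sub_one_mem_jacobson_bot
    (h : ∀ u : Rˣ, (u : R) - 1 ∈ J(R)) (U : (R ⧸ J(R))ˣ) : (U : R ⧸ J(R)) = 1 := by
  obtain ⟨u, hu⟩ := Ideal.Quotient.exists_units_mk_jacobson_bot U
  rw [← hu, ← sub_eq_zero, ← map_one (Ideal.Quotient.mk _), ← map_sub,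
    Ideal.Quotient.eq_zero_iff_mem]
  exact h u

end Jacobson

theorem semipotent_tfae (R : Type*) [Ring R] (hR : IsSemipotent R) :
    List.TFAE [IsUJsharp R,
      ∀ x : R, x ^ 2 - x ∈ Ideal.jacobson (⊥ : Ideal R),
      ∀ u : Rˣ, (u : R) - 1 ∈ Ideal.jacobson (⊥ : Ideal R)] := by
  have hS := hR.exists_isIdempotentElem_mul
  tfae_have 1 → 3 := fun h u => by
    have := isReduced_of_isNilpotent_units_sub_one hS h.isNilpotent_units_sub_one
    obtain ⟨n, -, hn⟩ := h u
    rw [← Ideal.Quotient.eq_zero_iff_mem, map_pow] at hn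
    rw [← Ideal.Quotient.eq_zero_iff_mem]
    exact eq_zero_of_pow_eq_zero hn
  tfae_have 3 → 1 := fun h u => ⟨1, le_rfl, by simpa using h u⟩
  tfae_have 2 → 3 := fun h u => by
    have hu : (u : R) - 1 = ↑u⁻¹ * ((u : R) ^ 2 - u) := by
      rw [mul_sub, sq, u.inv_mul_cancel_left, u.inv_mul]
    exact hu ▸ Ideal.mul_mem_left _ _ (h u)
  tfae_have 3 → 2 := fun h x => by
    have hx := isIdempotentElem_of_units_eq_one hS
      (Ideal.Quotient.units_eq_one_of_forall_sub_one_mem_jacobson_bot h) (Ideal.Quotient.mk _ x)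
    rw [← Ideal.Quotient.eq_zero_iff_mem, map_sub, map_pow, sq, hx.eq, sub_self]
  tfae_finish
end

section
/- Let R be a ring and let I be a two-sided ideal of R contained in the Jacobson radical J(R). Then R is a UJ# ring if and only if the quotient ring R/I is a UJ# ring. -/
/-- Noncommutative version: if `r - 1` lies in the Jacobson radical, `r` is a unit. -/
lemma isUnit_of_sub_one_mem_jacobson_bot' {R : Type*} [Ring R] (r : R)
    (h : r - 1 ∈ Ideal.jacobson (⊥ : Ideal R)) : IsUnit r := by
  obtain ⟨s, hs⟩ := Ideal.exists_mul_sub_mem_of_sub_one_mem_jacobson r h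
  rw [Ideal.mem_bot, sub_eq_zero] at hs
  have hs1 : s - 1 ∈ Ideal.jacobson (⊥ : Ideal R) := by
    have : s - 1 = -(s * (r - 1)) := by rw [mul_sub, mul_one, hs]; abel
    rw [this]
    exact neg_mem (Ideal.mul_mem_left _ s h)
  obtain ⟨t, ht⟩ := Ideal.exists_mul_sub_mem_of_sub_one_mem_jacobson s hs1
  rw [Ideal.mem_bot, sub_eq_zero] at ht
  have htr : t = r := by
    calc t = t * (s * r) := by rw [hs, mul_one]
    _ = (t * s) * r := by rw [mul_assoc]
    _ = r := by rw [ht, one_mul]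
  exact ⟨⟨r, s, by rw [← htr]; exact ht, hs⟩, rfl⟩

/-- If `a * b` and `b * a` are units, then `a` is a unit. -/
lemma isUnit_left_of_isUnit_mul {R : Type*} [Ring R] {a b : R}
    (h1 : IsUnit (a * b)) (h2 : IsUnit (b * a)) : IsUnit a := by
  obtain ⟨w, hw⟩ := h1
  obtain ⟨u, hu⟩ := h2
  have hr : a * (b * ↑w⁻¹) = 1 := by
    rw [← mul_assoc, ← hw, Units.mul_inv]
  have hl : (↑u⁻¹ * b) * a = 1 := by
    rw [mul_assoc, ← hu, Units.inv_mul]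
  have heq : (↑u⁻¹ * b : R) = b * ↑w⁻¹ := by
    calc (↑u⁻¹ * b : R) = (↑u⁻¹ * b) * (a * (b * ↑w⁻¹)) := by rw [hr, mul_one]
    _ = ((↑u⁻¹ * b) * a) * (b * ↑w⁻¹) := by noncomm_ring
    _ = b * ↑w⁻¹ := by rw [hl, one_mul]
  exact ⟨⟨a, b * ↑w⁻¹, hr, by rw [← heq]; exact hl⟩, rfl⟩

theorem isUJsharp_iff_quotient_isUJsharp (R : Type*) [Ring R] (I : TwoSidedIdeal R)
    (hI : ∀ x ∈ I, x ∈ Ideal.jacobson (⊥ : Ideal R)) :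
    IsUJsharp R ↔ IsUJsharp I.ringCon.Quotient := by
  set π : R →+* I.ringCon.Quotient := RingCon.mk' I.ringCon with hπ
  have hsurj : Function.Surjective π := fun x => Quot.inductionOn x fun a => ⟨a, rfl⟩
  have hker : ∀ x : R, π x = 0 ↔ x ∈ I := by
    intro x
    show (x : I.ringCon.Quotient) = ((0 : R) : I.ringCon.Quotient) ↔ x ∈ I
    rw [RingCon.eq]
    exact (TwoSidedIdeal.mem_iff I x).symm
  have hkerle : RingHom.ker π ≤ Ideal.jacobson (⊥ : Ideal R) := by
    intro x hx
    exact hI x ((hker x).mp hx)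
  -- the key fact: membership in the Jacobson radical transfers along π
  have key : ∀ x : R, x ∈ Ideal.jacobson (⊥ : Ideal R) ↔
      π x ∈ Ideal.jacobson (⊥ : Ideal I.ringCon.Quotient) := by
    have hcomap := Ideal.comap_jacobson_of_surjective (f := π) hsurj
      (K := (⊥ : Ideal I.ringCon.Quotient))
    have hcb : Ideal.comap π (⊥ : Ideal I.ringCon.Quotient) = RingHom.ker π := rfl
    rw [hcb] at hcomap
    have heq : (RingHom.ker π).jacobson = Ideal.jacobson (⊥ : Ideal R) := by
      apply le_antisymm
      · calc (RingHom.ker π).jacobson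
            ≤ (Ideal.jacobson (⊥ : Ideal R)).jacobson := Ideal.jacobson_mono hkerle
        _ = Ideal.jacobson (⊥ : Ideal R) := Ideal.jacobson_idem
      · exact Ideal.jacobson_mono bot_le
    intro x
    constructor
    · intro hx
      have : x ∈ Ideal.comap π (Ideal.jacobson (⊥ : Ideal I.ringCon.Quotient)) := by
        rw [hcomap, heq]; exact hx
      exact this
    · intro hx
      have : x ∈ Ideal.comap π (Ideal.jacobson (⊥ : Ideal I.ringCon.Quotient)) := hx
      rw [hcomap, heq] at this
      exact this
  constructor
  · intro hR v
    obtain ⟨a, ha⟩ := hsurj (v : I.ringCon.Quotient)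
    obtain ⟨b, hb⟩ := hsurj ((v⁻¹ : (I.ringCon.Quotient)ˣ) : I.ringCon.Quotient)
    have hab : a * b - 1 ∈ Ideal.jacobson (⊥ : Ideal R) := by
      apply hkerle
      show π (a * b - 1) = 0
      rw [map_sub, map_mul, map_one, ha, hb, Units.mul_inv, sub_self]
    have hba : b * a - 1 ∈ Ideal.jacobson (⊥ : Ideal R) := by
      apply hkerle
      show π (b * a - 1) = 0
      rw [map_sub, map_mul, map_one, ha, hb, Units.inv_mul, sub_self]
    have hua : IsUnit a :=
      isUnit_left_of_isUnit_mul (isUnit_of_sub_one_mem_jacobson_bot' _ hab)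
        (isUnit_of_sub_one_mem_jacobson_bot' _ hba)
    obtain ⟨ua, hua⟩ := hua
    obtain ⟨n, hn1, hn⟩ := hR ua
    refine ⟨n, hn1, ?_⟩
    have : π ((a - 1) ^ n) ∈ Ideal.jacobson (⊥ : Ideal I.ringCon.Quotient) := by
      rw [hua] at hn
      exact (key _).mp hn
    rwa [map_pow, map_sub, map_one, ha] at this
  · intro hQ u
    set v : (I.ringCon.Quotient)ˣ := Units.map π.toMonoidHom u with hv
    obtain ⟨n, hn1, hn⟩ := hQ v
    refine ⟨n, hn1, ?_⟩
    apply (key _).mpr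
    rw [map_pow, map_sub, map_one]
    have : (v : I.ringCon.Quotient) = π (u : R) := rfl
    rwa [this] at hn
end

section
/- Let R be a ring. Then R is an exchange ring that is UJ# if and only if R is semi-Boolean, i.e., x^2 - x ∈ J(R) for every x ∈ R and idempotents lift modulo J(R) (for every a ∈ R with a^2 - a ∈ J(R) there exists an idempotent e ∈ R with a - e ∈ J(R)). -/
/-- A ring is an exchange ring if for every element `a` there is an idempotent
`e ∈ Ra` with `1 - e ∈ R(1 - a)`. -/
def IsExchange (R : Type*) [Ring R] : Prop :=
  ∀ a : R, ∃ e : R, IsIdempotentElem e ∧ e ∈ Ideal.span {a} ∧ 1 - e ∈ Ideal.span {1 - a}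

/-!
Modulo `J(R)` the UJ# condition says that every unit is unipotent (units lift modulo `J(R)`), so
it suffices to show that an exchange ring `T` with `J(T) = 0` and unipotent units is Boolean.
Such a `T` is reduced: if `z² = 0 ≠ z`, the exchange property gives an idempotent
`0 ≠ e = r z`, and `z e`, `e r (1 - e)` are the matrix units `e₁₂`, `e₂₁` of a corner `M₂(S)`,
which contains a unit that is not unipotent. Being reduced, `T` has `1` as its only unit, its
idempotents are central and it is Dedekind-finite. For an exchange idempotent `e = r a` the
element `e a + (1 - e)` then has the left inverse `e r + (1 - e)`, hence equals `1`, so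
`e a = e`; likewise `(1 - e)(1 - a) = 1 - e`, and together these give `a = e`.

Conversely, if `R/J(R)` is Boolean and `f` is an idempotent lifting `a`, conjugating `f` by the
unit `f a + (1 - f)(1 - a) ∈ 1 + J(R)` gives an exchange idempotent for `a`.
-/

def HasUnipotentUnits (R : Type*) [Ring R] : Prop :=
  ∀ u : Rˣ, IsNilpotent ((u : R) - 1)

section

variable {R : Type*} [Ring R]

namespace Ring

theorem exists_mul_one_add_eq_one_of_mem_jacobson {z : R} (hz : z ∈ jacobson R) :
    ∃ s, s * (1 + z) = 1 := by
  obtain ⟨s, hs⟩ := Ideal.mem_jacobson_iff.mp (Ideal.jacobson_bot (R := R) ▸ hz) 1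
  exact ⟨s, by rw [Ideal.mem_bot, sub_eq_zero, mul_one] at hs; rw [mul_one_add, add_comm, hs]⟩

theorem isUnit_one_add_of_mem_jacobson {z : R} (hz : z ∈ jacobson R) : IsUnit (1 + z) := by
  obtain ⟨s, hs⟩ := exists_mul_one_add_eq_one_of_mem_jacobson hz
  have hsz : s = 1 + -(s * z) := by rw [← sub_eq_add_neg, eq_sub_iff_add_eq, ← mul_one_add, hs]
  obtain ⟨t, ht⟩ := exists_mul_one_add_eq_one_of_mem_jacobson
    (neg_mem (Ideal.mul_mem_left _ s hz))
  rw [← hsz] at ht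
  exact isUnit_iff_exists.mpr ⟨s, left_inv_eq_right_inv ht hs ▸ ht, hs⟩

instance isLocalHom_mk_jacobson : IsLocalHom (Ideal.Quotient.mk (jacobson R)) where
  map_nonunit a ha := by
    obtain ⟨b', hab, hba⟩ := isUnit_iff_exists.mp ha
    obtain ⟨b, rfl⟩ := Ideal.Quotient.mk_surjective b'
    have hunit {x y : R} (h : Ideal.Quotient.mk (jacobson R) (x * y) = 1) : IsUnit (x * y) := by
      rw [← map_one (Ideal.Quotient.mk _), Ideal.Quotient.eq] at h
      simpa using isUnit_one_add_of_mem_jacobson h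
    obtain ⟨⟨c, hc⟩, -⟩ := isUnit_iff_exists_and_exists.mp <| hunit (by rw [map_mul]; exact hab)
    obtain ⟨-, ⟨d, hd⟩⟩ := isUnit_iff_exists_and_exists.mp <| hunit (by rw [map_mul]; exact hba)
    exact isUnit_iff_exists_and_exists.mpr
      ⟨⟨b * c, by rw [← mul_assoc, hc]⟩, ⟨d * b, by rw [mul_assoc, hd]⟩⟩

end Ring


theorem Ideal.sub_mem_of_sq_sub_mem {I : Ideal R} {a e : R} (ha : a ^ 2 - a ∈ I)
    (he : e ∈ Ideal.span {a}) (he' : 1 - e ∈ Ideal.span {1 - a}) : a - e ∈ I := by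
  obtain ⟨t, rfl⟩ := Ideal.mem_span_singleton'.mp he
  obtain ⟨s, hs⟩ := Ideal.mem_span_singleton'.mp he'
  have key : a - t * a = (t - s) * (a ^ 2 - a) := by
    calc a - t * a = (1 - t * a) * a + t * (a ^ 2 - a) := by noncomm_ring
      _ = (t - s) * (a ^ 2 - a) := by rw [← hs]; noncomm_ring
  exact key ▸ I.mul_mem_left _ ha

namespace IsExchange

theorem of_surjective {S : Type*} [Ring S] (f : R →+* S) (hf : Function.Surjective f)
    (hR : IsExchange R) : IsExchange S := by
  intro b
  obtain ⟨a, rfl⟩ := hf b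
  obtain ⟨e, he, hea, hea'⟩ := hR a
  obtain ⟨r, rfl⟩ := Ideal.mem_span_singleton'.mp hea
  obtain ⟨s, hs⟩ := Ideal.mem_span_singleton'.mp hea'
  refine ⟨f (r * a), he.map f, Ideal.mem_span_singleton'.mpr ⟨f r, (map_mul f r a).symm⟩,
    Ideal.mem_span_singleton'.mpr ⟨f s, ?_⟩⟩
  rw [← map_one f, ← map_sub, ← map_sub, ← map_mul, hs]

theorem exists_isIdempotentElem_mul_ne_zero (hR : IsExchange R) {z : R}
    (hz : z ∉ Ring.jacobson R) : ∃ r, IsIdempotentElem (r * z) ∧ r * z ≠ 0 := by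
  by_contra! h
  refine hz (Ideal.jacobson_bot (R := R) ▸ Ideal.mem_jacobson_iff.mpr fun y => ?_)
  obtain ⟨e, he, hea, hea'⟩ := hR (-(y * z))
  obtain ⟨t, rfl⟩ := Ideal.mem_span_singleton'.mp hea
  obtain ⟨s, hs⟩ := Ideal.mem_span_singleton'.mp hea'
  have ht : -(t * y) * z = 0 := h _ (by rwa [neg_mul, mul_assoc, ← mul_neg])
  rw [neg_mul, mul_assoc, ← mul_neg] at ht
  rw [ht, sub_zero, sub_neg_eq_add] at hs
  exact ⟨s, by rw [Ideal.mem_bot, ← hs]; noncomm_ring⟩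

end IsExchange

section Reduced

variable [IsReduced R]

theorem mul_eq_zero_symm_of_isReduced {x y : R} (h : x * y = 0) : y * x = 0 :=
  (isReduced_iff_pow_one_lt 2 one_lt_two).mp ‹_› _ <| by
    rw [sq, mul_assoc, ← mul_assoc x, h, zero_mul, mul_zero]

theorem mul_mul_eq_zero_of_mul_eq_zero {x y : R} (h : x * y = 0) (r : R) : x * r * y = 0 :=
  mul_eq_zero_symm_of_isReduced <| by rw [← mul_assoc, mul_eq_zero_symm_of_isReduced h, zero_mul]

theorem IsIdempotentElem.commute_of_isReduced_s4 {e : R} (he : IsIdempotentElem e) (x : R) :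
    Commute e x := by
  have h₁ : e * x * (1 - e) = 0 := mul_mul_eq_zero_of_mul_eq_zero he.mul_one_sub_self x
  have h₂ : (1 - e) * x * e = 0 := mul_mul_eq_zero_of_mul_eq_zero he.one_sub_mul_self x
  rw [mul_one_sub, sub_eq_zero] at h₁
  rw [mul_assoc, one_sub_mul, sub_eq_zero, ← mul_assoc] at h₂
  exact h₁.trans h₂.symm

instance isDedekindFiniteMonoid_of_isReduced_s4 : IsDedekindFiniteMonoid R where
  mul_eq_one_symm {a b} hab := by
    have : (1 - b * a) * b = 0 := by rw [sub_mul, one_mul, mul_assoc, hab, mul_one, sub_self]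
    rw [← sub_eq_zero, ← neg_sub, neg_eq_zero]
    calc 1 - b * a = a * (b * (1 - b * a)) := by rw [← mul_assoc, hab, one_mul]
      _ = 0 := by rw [mul_eq_zero_symm_of_isReduced this, mul_zero]

end Reduced

namespace HasUnipotentUnits

theorem eq_zero_of_matrixUnits (hR : HasUnipotentUnits R) {u c : R}
    (huu : u * u = 0) (hcc : c * c = 0) (hucu : u * c * u = u) (hcuc : c * u * c = c) :
    u = 0 := by
  -- In the corner `h R h ≅ M₂(S)`, with `u = e₁₂` and `c = e₂₁`, `N` is the matrix `[[0,1],[1,1]]`,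
  -- with inverse `N' = [[-1,1],[1,0]]`; and `1 + N` is a unit with inverse `1 + u c - u - c`.
  have huu' (x : R) : u * (u * x) = 0 := by rw [← mul_assoc, huu, zero_mul]
  have hcc' (x : R) : c * (c * x) = 0 := by rw [← mul_assoc, hcc, zero_mul]
  rw [mul_assoc] at hucu hcuc
  set h := u * c + c * u
  set N := u + c + c * u
  set N' := u + c - u * c
  have hV : IsUnit (1 + N) := isUnit_iff_exists.mpr
    ⟨1 + u * c - u - c,
      by simp only [N, mul_add, add_mul, mul_sub, mul_one, one_mul, mul_assoc, huu, hcc, hcuc,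
          huu', mul_zero, add_zero, zero_add]; abel,
      by simp only [N, mul_add, add_mul, sub_mul, mul_one, one_mul, mul_assoc, huu, hcc, hucu,
          hcc', mul_zero, add_zero, sub_zero]; abel⟩
  have hN : IsNilpotent N := by simpa using hR hV.unit
  have hNN' : N * N' = h := by
    simp only [N, N', mul_add, add_mul, mul_sub, mul_assoc, huu, hcc, hcuc, huu', h, mul_zero,
      add_zero, zero_add]
    abel
  have hN'N : N' * N = h := by
    simp only [N, N', mul_add, add_mul, sub_mul, mul_assoc, huu, hcc, hucu, hcc', h, mul_zero,
      add_zero, zero_add, sub_zero]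
    abel
  have hidem : IsIdempotentElem h := by
    simp only [IsIdempotentElem, mul_add, add_mul, mul_assoc, hucu, hcuc, huu', hcc', h, mul_zero,
      add_zero, zero_add]
  have hcomm : Commute N' N := hN'N.trans hNN'.symm
  have h0 : h = 0 := hidem.eq_zero_of_isNilpotent (hN'N ▸ hcomm.isNilpotent_mul_left hN)
  calc u = h * u := by simp only [h, add_mul, mul_assoc, huu, hucu, mul_zero, add_zero]
    _ = 0 := by rw [h0, zero_mul]

theorem isReduced (hU : HasUnipotentUnits R) (hE : IsExchange R) (hJ : Ring.jacobson R = ⊥) :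
    IsReduced R := by
  refine (isReduced_iff_pow_one_lt 2 one_lt_two).mpr fun z hz => ?_
  by_contra hz0
  obtain ⟨r, he, he0⟩ :=
    hE.exists_isIdempotentElem_mul_ne_zero (z := z) (by rwa [hJ, Ideal.mem_bot])
  obtain ⟨e, hr⟩ : ∃ e, r * z = e := ⟨_, rfl⟩
  rw [hr] at he he0
  have hez : e * z = 0 := by rw [← hr, mul_assoc, ← sq, hz, mul_zero]
  have hcu : e * r * (1 - e) * (z * e) = e := by
    calc e * r * (1 - e) * (z * e) = e * (r * z) * e - e * r * (e * z) * e := by noncomm_ring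
      _ = e := by rw [hr, hez, he.eq, he.eq, mul_zero, zero_mul, sub_zero]
  refine he0 (hcu ▸ ?_)
  rw [hU.eq_zero_of_matrixUnits (u := z * e) (c := e * r * (1 - e)), mul_zero]
  · rw [mul_assoc, ← mul_assoc e, hez, zero_mul, mul_zero]
  · rw [show e * r * (1 - e) * (e * r * (1 - e)) = e * r * ((1 - e) * e) * (r * (1 - e)) by
      noncomm_ring, he.one_sub_mul_self, mul_zero, zero_mul]
  · rw [mul_assoc, hcu, mul_assoc, he.eq]
  · rw [hcu, ← mul_assoc, ← mul_assoc, he.eq]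

theorem eq_one [IsReduced R] (hU : HasUnipotentUnits R) (u : Rˣ) : (u : R) = 1 :=
  sub_eq_zero.mp (hU u).eq_zero

end HasUnipotentUnits

theorem IsIdempotentElem.mul_eq_self_of_mem_span_singleton [IsReduced R]
    (h1 : ∀ u : Rˣ, (u : R) = 1) {e a : R} (he : IsIdempotentElem e)
    (hea : e ∈ Ideal.span {a}) : e * a = e := by
  obtain ⟨r, hr⟩ := Ideal.mem_span_singleton'.mp hea
  have hL : (e * r + (1 - e)) * (e * a + (1 - e)) = 1 := by
    calc (e * r + (1 - e)) * (e * a + (1 - e))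
        = e * (r * e) * a + (e * r - e * (r * e)) + (e * a - e * e * a) + (1 - e - e + e * e) :=
          by noncomm_ring
      _ = e * r * a + (e * r - e * r) + (e * a - e * a) + (1 - e - e + e) := by
          rw [← (he.commute_of_isReduced_s4 r).eq, ← mul_assoc, he.eq]
      _ = 1 := by rw [mul_assoc, hr, he.eq]; abel
  have hx : e * a + (1 - e) = 1 := h1 (IsUnit.of_mul_eq_one_right _ hL).unit
  exact (eq_sub_of_add_eq hx).trans (sub_sub_cancel 1 e)

namespace IsExchange

theorem isIdempotentElem_of_forall_units_eq_one [IsReduced R] (hE : IsExchange R)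
    (h1 : ∀ u : Rˣ, (u : R) = 1) (a : R) : IsIdempotentElem a := by
  obtain ⟨e, he, hea, hea'⟩ := hE a
  have h₁ : e * a = e := he.mul_eq_self_of_mem_span_singleton h1 hea
  have h₂ : (1 - e) * (1 - a) = 1 - e := he.one_sub.mul_eq_self_of_mem_span_singleton h1 hea'
  have hae : a = e := by
    calc a = e * a + ((1 - e) - (1 - e) * (1 - a)) := by noncomm_ring
      _ = e := by rw [h₁, h₂, sub_self, add_zero]
  rwa [hae]

theorem isIdempotentElem_of_hasUnipotentUnits (hE : IsExchange R) (hJ : Ring.jacobson R = ⊥)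
    (hU : HasUnipotentUnits R) (a : R) : IsIdempotentElem a :=
  have := hU.isReduced hE hJ
  hE.isIdempotentElem_of_forall_units_eq_one hU.eq_one a

end IsExchange

theorem IsUJsharp.hasUnipotentUnits_quotient (h : IsUJsharp R) :
    HasUnipotentUnits (R ⧸ Ring.jacobson R) := by
  intro u
  obtain ⟨a, ha⟩ := Ideal.Quotient.mk_surjective (u : R ⧸ Ring.jacobson R)
  have hua : IsUnit a := IsUnit.of_map (Ideal.Quotient.mk _) a (ha ▸ u.isUnit)
  obtain ⟨n, -, hn⟩ := h hua.unit
  refine ⟨n, ?_⟩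
  rw [← ha, ← map_one (Ideal.Quotient.mk _), ← map_sub, ← map_pow,
    Ideal.Quotient.eq_zero_iff_mem, ← Ideal.jacobson_bot]
  exact hn

theorem isUJsharp_of_forall_sq_sub_mem_jacobson (h : ∀ x : R, x ^ 2 - x ∈ Ring.jacobson R) :
    IsUJsharp R := fun u => ⟨1, le_rfl, by
  have hu : (u : R) - 1 = ↑u⁻¹ * ((u : R) ^ 2 - u) := by
    rw [sq, mul_sub, ← mul_assoc, Units.inv_mul, one_mul]
  rw [pow_one, Ideal.jacobson_bot, hu]
  exact Ideal.mul_mem_left _ _ (h u)⟩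

theorem IsIdempotentElem.exists_exchange_of_sub_mem_jacobson {a f : R} (hf : IsIdempotentElem f)
    (ha : a - f ∈ Ring.jacobson R) :
    ∃ e, IsIdempotentElem e ∧ e ∈ Ideal.span {a} ∧ 1 - e ∈ Ideal.span {1 - a} := by
  obtain ⟨w, hw⟩ : IsUnit (f * a + (1 - f) * (1 - a)) := by
    have : f * a + (1 - f) * (1 - a) = 1 + (2 * f - 1) * (a - f) := by
      calc f * a + (1 - f) * (1 - a) = 1 + (2 * f - 1) * (a - f) + 2 * (f * f - f) := by
            noncomm_ring
        _ = 1 + (2 * f - 1) * (a - f) := by rw [hf.eq, sub_self, mul_zero, add_zero]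
    rw [this]
    exact Ring.isUnit_one_add_of_mem_jacobson (Ideal.mul_mem_left _ _ ha)
  have hfw : f * w = f * a := by
    rw [hw, mul_add, ← mul_assoc, ← mul_assoc, hf.eq, hf.mul_one_sub_self, zero_mul, add_zero]
  have hfw' : (1 - f) * w = (1 - f) * (1 - a) := by
    rw [hw, mul_add, ← mul_assoc, ← mul_assoc, hf.one_sub.eq, hf.one_sub_mul_self, zero_mul,
      zero_add]
  refine ⟨↑w⁻¹ * f * w, ?_, Ideal.mem_span_singleton'.mpr ⟨↑w⁻¹ * f, ?_⟩,
    Ideal.mem_span_singleton'.mpr ⟨↑w⁻¹ * (1 - f), ?_⟩⟩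
  · simp only [IsIdempotentElem, mul_assoc, Units.mul_inv_cancel_left]
    rw [← mul_assoc f f, hf.eq]
  · rw [mul_assoc, ← hfw, ← mul_assoc]
  · rw [mul_assoc, ← hfw', one_sub_mul, mul_sub, Units.inv_mul, mul_assoc]

end

theorem exchange_isUJsharp_iff_semiBoolean (R : Type*) [Ring R] :
    (IsExchange R ∧ IsUJsharp R) ↔
      ((∀ x : R, x ^ 2 - x ∈ Ideal.jacobson (⊥ : Ideal R)) ∧
        ∀ a : R, a ^ 2 - a ∈ Ideal.jacobson (⊥ : Ideal R) →
          ∃ e : R, IsIdempotentElem e ∧ a - e ∈ Ideal.jacobson (⊥ : Ideal R)) := by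
  simp only [Ideal.jacobson_bot]
  constructor
  · rintro ⟨hE, hUJ⟩
    have hQ : ∀ x : R ⧸ Ring.jacobson R, IsIdempotentElem x :=
      (hE.of_surjective _ Ideal.Quotient.mk_surjective).isIdempotentElem_of_hasUnipotentUnits
        (Ring.jacobson_quotient_jacobson R) hUJ.hasUnipotentUnits_quotient
    refine ⟨fun x => ?_, fun a ha => ?_⟩
    · rw [← Ideal.Quotient.eq_zero_iff_mem, map_sub, map_pow, sq, (hQ _).eq, sub_self]
    · obtain ⟨e, he, hea, hea'⟩ := hE a
      exact ⟨e, he, Ideal.sub_mem_of_sq_sub_mem ha hea hea'⟩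
  · rintro ⟨hsq, hlift⟩
    refine ⟨fun a => ?_, isUJsharp_of_forall_sq_sub_mem_jacobson hsq⟩
    obtain ⟨f, hf, haf⟩ := hlift a (hsq a)
    exact hf.exists_exchange_of_sub_mem_jacobson haf
end

section
/- Let R be a ring. Then R is reduced (has no nonzero nilpotent elements) if and only if J#(R[X]) = {0}, i.e., the only polynomial f over R such that f^n ∈ J(R[X]) for some n ≥ 1 is the zero polynomial. -/
open Polynomial

namespace IsReduced

variable {M₀ : Type*} [MonoidWithZero M₀] [IsReduced M₀] {a b : M₀}

theorem mul_eq_zero_comm : a * b = 0 ↔ b * a = 0 := by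
  have swap : ∀ {x y : M₀}, x * y = 0 → y * x = 0 := fun {x y} h =>
    eq_zero_of_pow_eq_zero (n := 2) (by rw [sq, mul_assoc, ← mul_assoc x, h, zero_mul, mul_zero])
  exact ⟨swap, swap⟩

theorem mul_mul_eq_zero (h : a * b = 0) (c : M₀) : a * c * b = 0 := by
  have hba : b * a = 0 := mul_eq_zero_comm.1 h
  refine eq_zero_of_pow_eq_zero (n := 2) ?_
  rw [sq, mul_assoc, mul_assoc, ← mul_assoc b, ← mul_assoc b, hba, zero_mul, zero_mul, mul_zero,
    mul_zero]

theorem mul_eq_zero_of_mul_self_mul_eq_zero (h : a * a * b = 0) : a * b = 0 := by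
  have haba : a * b * a = 0 := mul_eq_zero_comm.1 (by rwa [← mul_assoc])
  exact eq_zero_of_pow_eq_zero (n := 2) (by rw [sq, ← mul_assoc, haba, zero_mul])

end IsReduced

theorem IsNilpotent.mem_jsharp {S : Type*} [Ring S] {z : S} (hz : IsNilpotent z) :
    z ∈ Jsharp S := by
  obtain ⟨n, hn⟩ := hz
  exact ⟨n + 1, Nat.le_add_left 1 n, by rw [pow_eq_zero_of_le n.le_succ hn]; exact zero_mem _⟩

namespace Ideal

variable {S : Type*} [Ring S] {u : S}

theorem exists_mul_eq_one_of_sub_one_mem_jacobson_bot (h : u - 1 ∈ jacobson (⊥ : Ideal S)) :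
    ∃ z, z * u = 1 := by
  obtain ⟨z, hz⟩ := mem_jacobson_iff.1 h 1
  rw [mem_bot, mul_one, mul_sub, mul_one, sub_add_cancel, sub_eq_zero] at hz
  exact ⟨z, hz⟩

/-- A version of `Ideal.isUnit_of_sub_one_mem_jacobson_bot` for noncommutative rings. -/
theorem isUnit_of_sub_one_mem_jacobson_bot'_s5 (h : u - 1 ∈ jacobson (⊥ : Ideal S)) : IsUnit u := by
  obtain ⟨z, hzu⟩ := exists_mul_eq_one_of_sub_one_mem_jacobson_bot h
  have hz : z - 1 ∈ jacobson (⊥ : Ideal S) := by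
    rw [show z - 1 = -(z * (u - 1)) by rw [mul_sub, hzu, mul_one, neg_sub]]
    exact neg_mem (mul_mem_left _ z h)
  obtain ⟨w, hwz⟩ := exists_mul_eq_one_of_sub_one_mem_jacobson_bot hz
  obtain rfl : w = u := left_inv_eq_right_inv hwz hzu
  exact ⟨⟨w, z, hwz, hzu⟩, rfl⟩

end Ideal

namespace Polynomial

variable {R : Type*} [Semiring R] [IsReduced R]

instance : IsReduced R[X] := by
  refine (isReduced_iff_pow_one_lt 2 one_lt_two).2 fun f hf => ?_
  have hlead : f.leadingCoeff ^ 2 = 0 := by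
    rw [sq, ← coeff_mul_degree_add_degree, ← sq, hf, coeff_zero]
  exact leadingCoeff_eq_zero.1 (eq_zero_of_pow_eq_zero hlead)

theorem C_leadingCoeff_mul_eq_zero_of_mul_eq_C {p q : R[X]} {c : R} (hp : 0 < p.natDegree)
    (h : p * q = C c) : C p.leadingCoeff * q = 0 := by
  set a := p.leadingCoeff
  by_contra hne
  -- `d` is the last index with `a * q_d ≠ 0`; of `a * (p * q)_(deg p + d) = 0` only `a * a * q_d` survives.
  set d := (C a * q).natDegree
  have htop : a * q.coeff d ≠ 0 := by
    rw [← coeff_C_mul]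
    exact mt leadingCoeff_eq_zero.1 hne
  have above (l : ℕ) (hl : d < l) : a * q.coeff l = 0 := by
    rw [← coeff_C_mul]
    exact coeff_eq_zero_of_natDegree_lt hl
  have hcoeff : a * (p * q).coeff (p.natDegree + d) = 0 := by
    rw [h, coeff_C, if_neg (by omega), mul_zero]
  rw [coeff_mul, Finset.mul_sum, Finset.sum_eq_single (p.natDegree, d)] at hcoeff
  · exact htop (IsReduced.mul_eq_zero_of_mul_self_mul_eq_zero (by rwa [← mul_assoc] at hcoeff))
  · rintro ⟨i, l⟩ hil hne'
    rw [Finset.HasAntidiagonal.mem_antidiagonal] at hil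
    rcases lt_or_ge d l with hl | hl
    · rw [← mul_assoc]
      exact IsReduced.mul_mul_eq_zero (above l hl) _
    · have hi : p.natDegree < i := by
        simp only [ne_eq, Prod.mk.injEq] at hne'
        omega
      rw [coeff_eq_zero_of_natDegree_lt hi, zero_mul, mul_zero]
  · simp

theorem natDegree_eq_zero_of_isUnit_of_isReduced {p : R[X]} (hp : IsUnit p) :
    p.natDegree = 0 := by
  obtain ⟨u, rfl⟩ := hp
  by_contra hdeg
  have hann : C (u : R[X]).leadingCoeff * ↑u⁻¹ = 0 :=
    C_leadingCoeff_mul_eq_zero_of_mul_eq_C (Nat.pos_of_ne_zero hdeg) (by rw [u.mul_inv, C_1])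
  have hlead : C (u : R[X]).leadingCoeff = 0 := by
    simpa [mul_assoc] using congrArg (· * (u : R[X])) hann
  rw [C_eq_zero, leadingCoeff_eq_zero] at hlead
  simp [hlead] at hdeg

end Polynomial

theorem Polynomial.eq_zero_of_pow_mem_jacobson_bot {R : Type*} [Ring R] [IsReduced R] {f : R[X]}
    {n : ℕ} (h : f ^ n ∈ Ideal.jacobson (⊥ : Ideal R[X])) : f = 0 := by
  nontriviality R
  have hunit : IsUnit (X * f ^ n + 1) :=
    Ideal.isUnit_of_sub_one_mem_jacobson_bot'_s5 (by simpa using Ideal.mul_mem_left _ X h)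
  have hdeg := natDegree_eq_zero_of_isUnit_of_isReduced hunit
  rw [← C_1, natDegree_add_C, X_mul] at hdeg
  have hpow : f ^ n = 0 := by
    by_contra hne
    rw [natDegree_mul_X hne] at hdeg
    omega
  exact eq_zero_of_pow_eq_zero hpow

theorem isReduced_iff_jsharp_polynomial_eq_zero (R : Type*) [Ring R] :
    IsReduced R ↔ Jsharp (Polynomial R) = {0} := by
  constructor
  · intro _
    exact Set.eq_singleton_iff_unique_mem.2
      ⟨IsNilpotent.zero.mem_jsharp, fun f ⟨_, _, hf⟩ => eq_zero_of_pow_mem_jacobson_bot hf⟩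
  · intro h
    refine ⟨fun a ha => C_eq_zero.1 ?_⟩
    simpa [h] using (ha.map C).mem_jsharp
end

section
/- Let R be a ring. Then R is a UJ# ring if and only if the formal power series ring R[[X]] is a UJ# ring. -/
/-!
The constant coefficient `R⟦X⟧ → R` is a surjective ring homomorphism that reflects units.
Along such a map `f`, an element `x` lies in the Jacobson radical iff `f x` does, because
`x ∈ J` means that every `1 + y * x` is a unit. Hence `J#(R⟦X⟧)` is the preimage of `J#(R)`,
and units of `R` lift to units of `R⟦X⟧`, so the `UJ#` property passes in both directions.
-/

namespace Ideal

variable {R S : Type*} [Ring R] [Ring S]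

theorem mem_jacobson_bot_iff_forall_isUnit_one_add_mul {x : R} :
    x ∈ jacobson (⊥ : Ideal R) ↔ ∀ y, IsUnit (1 + y * x) := by
  have left_inv_iff : ∀ y z : R, z * y * x + z - 1 ∈ (⊥ : Ideal R) ↔ z * (1 + y * x) = 1 := by
    intro y z
    rw [mem_bot, sub_eq_zero, mul_one_add, mul_assoc, add_comm]
  simp only [mem_jacobson_iff, left_inv_iff]
  constructor
  · intro hx y
    obtain ⟨z, hz⟩ := hx y
    -- `z = 1 + (-(z * y)) * x` is itself left invertible, so its right inverse `1 + y * x`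
    -- is also a left inverse.
    obtain ⟨w, hw⟩ := hx (-(z * y))
    have hz_eq : 1 + -(z * y) * x = z := by
      rw [mul_one_add, ← mul_assoc] at hz
      rw [neg_mul, ← hz, add_neg_cancel_right]
    rw [hz_eq] at hw
    have hw_eq : w = 1 + y * x := by
      calc w = w * (z * (1 + y * x)) := by rw [hz, mul_one]
        _ = 1 + y * x := by rw [← mul_assoc, hw, one_mul]
    exact ⟨⟨1 + y * x, z, hw_eq ▸ hw, hz⟩, rfl⟩
  · intro hx y
    obtain ⟨u, hu⟩ := hx y
    exact ⟨↑u⁻¹, by rw [← hu, Units.inv_mul]⟩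

theorem mem_jacobson_bot_iff_of_surjective {f : R →+* S} [IsLocalHom f]
    (hf : Function.Surjective f) {x : R} :
    x ∈ jacobson (⊥ : Ideal R) ↔ f x ∈ jacobson (⊥ : Ideal S) := by
  simp only [mem_jacobson_bot_iff_forall_isUnit_one_add_mul]
  constructor
  · intro hx y'
    obtain ⟨y, rfl⟩ := hf y'
    simpa using (hx y).map f
  · intro hx y
    exact IsUnit.of_map f _ (by simpa using hx (f y))

end Ideal

section

variable {R S : Type*} [Ring R] [Ring S] {f : R →+* S} [IsLocalHom f]

theorem mem_Jsharp_iff_of_surjective (hf : Function.Surjective f) {x : R} :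
    x ∈ Jsharp R ↔ f x ∈ Jsharp S := by
  simp only [Jsharp, Set.mem_ofPred_eq, ← map_pow, Ideal.mem_jacobson_bot_iff_of_surjective hf]

theorem isUJsharp_iff_of_surjective (hf : Function.Surjective f) :
    IsUJsharp R ↔ IsUJsharp S := by
  constructor
  · intro hR v
    obtain ⟨r, hr⟩ := hf v
    obtain ⟨u, rfl⟩ := IsUnit.of_map f r (hr ▸ v.isUnit)
    simpa [hr] using (mem_Jsharp_iff_of_surjective hf).mp (hR u)
  · intro hS u
    simpa using (mem_Jsharp_iff_of_surjective hf).mpr (by simpa using hS (Units.map f u))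

end

instance PowerSeries.isLocalHom_constantCoeff {R : Type*} [Ring R] :
    IsLocalHom (PowerSeries.constantCoeff (R := R)) :=
  ⟨fun _ => PowerSeries.isUnit_iff_constantCoeff.mpr⟩

theorem isUJsharp_iff_powerSeries (R : Type*) [Ring R] :
    IsUJsharp R ↔ IsUJsharp (PowerSeries R) :=
  (isUJsharp_iff_of_surjective PowerSeries.constantCoeff_surj).symm
end

section
/- A ring R is local (i.e., R is nontrivial and the non-units of R form an additive subgroup, equivalently a ≠ unit and 1 - a ≠ unit never both happen) if and only if every element of R is either a unit or lies in J#(R). -/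
private lemma left_inv_of_mem_jacobson {R : Type*} [Ring R] {x : R}
    (hx : x ∈ Ideal.jacobson (⊥ : Ideal R)) : ∃ z : R, z * (1 - x) = 1 := by
  obtain ⟨z, hz⟩ := Ideal.mem_jacobson_iff.mp hx (-1)
  rw [Ideal.mem_bot, sub_eq_zero] at hz
  refine ⟨z, ?_⟩
  calc z * (1 - x) = z * (-1) * x + z := by noncomm_ring
    _ = 1 := hz

private lemma isUnit_one_sub_of_mem_jacobson {R : Type*} [Ring R] {x : R}
    (hx : x ∈ Ideal.jacobson (⊥ : Ideal R)) : IsUnit (1 - x) := by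
  obtain ⟨z, hz⟩ := left_inv_of_mem_jacobson hx
  have hzx : -(z * x) ∈ Ideal.jacobson (⊥ : Ideal R) := by
    rw [← neg_mul]
    exact Ideal.mul_mem_left _ (-z) hx
  obtain ⟨w, hw⟩ := left_inv_of_mem_jacobson hzx
  have hwz : w * z = 1 := by
    have hz' : z = 1 - -(z * x) := by
      have : z * (1 - x) = z - z * x := by noncomm_ring
      rw [this] at hz
      rw [sub_neg_eq_add]
      exact sub_eq_iff_eq_add.mp hz
    rw [hz']; exact hw
  have hw' : w = 1 - x := by
    calc w = w * (z * (1 - x)) := by rw [hz, mul_one]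
      _ = (w * z) * (1 - x) := by rw [mul_assoc]
      _ = 1 - x := by rw [hwz, one_mul]
  have hrw : (1 - x) * z = 1 := by rw [← hw']; exact hwz
  exact isUnit_iff_exists.mpr ⟨z, hrw, hz⟩

theorem isLocalRing_iff_unit_or_jsharp (R : Type*) [Ring R] [Nontrivial R] :
    IsLocalRing R ↔ ∀ a : R, IsUnit a ∨ a ∈ Jsharp R := by
  constructor
  · intro hL a
    by_cases ha : IsUnit a
    · exact Or.inl ha
    refine Or.inr ⟨1, le_refl 1, ?_⟩
    rw [pow_one]
    refine Ideal.mem_sInf.mpr fun {J} hJ => ?_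
    by_contra haJ
    have hJmax : Ideal.IsMaximal J := hJ.2
    have hne : J ≠ Ideal.span {a} ⊔ J := by
      intro h
      apply haJ
      rw [h]
      exact Ideal.mem_sup_left (Ideal.subset_span rfl)
    have htop : Ideal.span {a} ⊔ J = ⊤ :=
      hJmax.1.2 _ (lt_of_le_of_ne le_sup_right hne)
    obtain ⟨p, hp, q, hq, hpq⟩ := Submodule.mem_sup.mp
      ((Ideal.eq_top_iff_one _).mp htop)
    obtain ⟨r, hr⟩ := Ideal.mem_span_singleton'.mp hp
    have h1 : r * a + q = 1 := by rw [hr]; exact hpq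
    rcases IsLocalRing.isUnit_or_isUnit_of_add_one h1 with hu | hu
    · -- r * a is a unit; derive that a is a unit, contradiction
      obtain ⟨u, hu⟩ := hu
      set b : R := (↑u⁻¹ : R) * r with hb
      have hba : b * a = 1 := by
        rw [hb, mul_assoc, ← hu, ← Units.val_mul, inv_mul_cancel u, Units.val_one]
      have he : (a * b) + (1 - a * b) = 1 := by abel
      rcases IsLocalRing.isUnit_or_isUnit_of_add_one he with he1 | he2
      · -- a * b is a unit idempotent, hence 1, so a has a two-sided inverse
        have hidem : (a * b) * (a * b) = a * b := by
          rw [mul_assoc, ← mul_assoc b a b, hba, one_mul]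
        obtain ⟨v, hv⟩ := he1
        have hv1 : (v : R) * (v : R) = (v : R) * 1 := by
          rw [hv, mul_one]; exact hidem
        have hvone : (v : R) = 1 := (Units.mul_right_inj v).mp hv1
        have hab1 : a * b = 1 := by rw [← hv]; exact hvone
        exact ha (isUnit_iff_exists.mpr ⟨b, hab1, hba⟩)
      · -- (1 - a*b) * a = 0, so a = 0, contradicting b * a = 1
        have hz : (1 - a * b) * a = 0 := by
          rw [sub_mul, one_mul, mul_assoc, hba, mul_one, sub_self]
        obtain ⟨v, hv⟩ := he2
        have hv1 : (v : R) * a = (v : R) * 0 := by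
          rw [hv, mul_zero]; exact hz
        have ha0 : a = 0 := (Units.mul_right_inj v).mp hv1
        rw [ha0, mul_zero] at hba
        exact one_ne_zero hba.symm
    · exact hJmax.1.1 (J.eq_top_of_isUnit_mem hq hu)
  · intro h
    refine ⟨fun {a b} hab => ?_⟩
    rcases h a with ha | ⟨n, hn, hpow⟩
    · exact Or.inl ha
    · right
      have hb : b = 1 - a := eq_sub_of_add_eq' hab
      have hun : IsUnit (1 - a ^ n) := isUnit_one_sub_of_mem_jacobson hpow
      set s : R := ∑ i ∈ Finset.range n, a ^ i with hs
      have h1 : (1 - a) * s = 1 - a ^ n := by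
        calc (1 - a) * s = -((a - 1) * s) := by rw [← neg_mul, neg_sub]
          _ = 1 - a ^ n := by rw [hs, mul_geom_sum, neg_sub]
      have h2 : s * (1 - a) = 1 - a ^ n := by
        calc s * (1 - a) = -(s * (a - 1)) := by rw [← mul_neg, neg_sub]
          _ = 1 - a ^ n := by rw [hs, geom_sum_mul, neg_sub]
      obtain ⟨v, hv⟩ := hun
      have hleft : ((1 - a) * (s * (↑v⁻¹ : R))) = 1 := by
        rw [← mul_assoc, h1, ← hv, ← Units.val_mul, mul_inv_cancel, Units.val_one]
      have hright : (((↑v⁻¹ : R) * s) * (1 - a)) = 1 := by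
        rw [mul_assoc, h2, ← hv, ← Units.val_mul, inv_mul_cancel, Units.val_one]
      have heq : (↑v⁻¹ : R) * s = s * (↑v⁻¹ : R) := by
        calc (↑v⁻¹ : R) * s = ((↑v⁻¹ : R) * s) * ((1 - a) * (s * (↑v⁻¹ : R))) := by
              rw [hleft, mul_one]
          _ = (((↑v⁻¹ : R) * s) * (1 - a)) * (s * (↑v⁻¹ : R)) := by
              simp only [mul_assoc]
          _ = s * (↑v⁻¹ : R) := by rw [hright, one_mul]
      rw [hb]
      exact isUnit_iff_exists.mpr ⟨s * (↑v⁻¹ : R), hleft, by rw [← heq]; exact hright⟩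
end

section
/- Let R be a UJ# ring and let S be a unital subring of R such that S ∩ J(R) ⊆ J(S). Then S is a UJ# ring. -/
theorem subring_isUJsharp (R : Type*) [Ring R] (h : IsUJsharp R) (S : Subring R)
    (hS : ∀ s : S, (s : R) ∈ Ideal.jacobson (⊥ : Ideal R) → s ∈ Ideal.jacobson (⊥ : Ideal S)) :
    IsUJsharp S := by
  intro u
  obtain ⟨n, hn, hmem⟩ := h (Units.map S.subtype.toMonoidHom u)
  refine ⟨n, hn, hS _ ?_⟩
  have : ((((u : S) - 1) ^ n : S) : R) = ((Units.map S.subtype.toMonoidHom u : R) - 1) ^ n := by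
    push_cast
    rfl
  rwa [this]
end

section
/- Let R be a von Neumann regular ring, i.e., for every a ∈ R there exists b ∈ R with a = a b a. Then R is a UJ# ring if and only if R is Boolean, i.e., x^2 = x for every x ∈ R. -/
section Auxiliary

variable {R : Type*} [Ring R]

/-- A power of an idempotent (with exponent at least one) equals the idempotent. -/
private lemma idem_pow_aux {M : Type*} [Monoid M] {x : M} (hx : x * x = x) :
    ∀ k : ℕ, x ^ (k+1) = x
  | 0 => pow_one x
  | k+1 => by rw [pow_succ, idem_pow_aux hx k, hx]

/-- In a von Neumann regular ring, the Jacobson radical is zero. -/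
private lemma jac_bot_of_reg (hreg : ∀ a : R, ∃ b : R, a = a * b * a) :
    Ideal.jacobson (⊥ : Ideal R) = ⊥ := by
  refine le_antisymm ?_ bot_le
  intro a ha
  obtain ⟨b, hab⟩ := hreg a
  have hemem : b * a ∈ Ideal.jacobson (⊥ : Ideal R) := by
    simpa [smul_eq_mul] using Submodule.smul_mem _ b ha
  have h1 : (1 : R) ∈ Ideal.span {1 - b * a} := by
    by_contra h1
    have hne : Ideal.span {1 - b * a} ≠ ⊤ := fun h => h1 (h ▸ Submodule.mem_top)
    obtain ⟨M, hM, hle⟩ := Ideal.exists_le_maximal _ hne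
    have heM : b * a ∈ M := (sInf_le ⟨bot_le, hM⟩ : Ideal.jacobson (⊥ : Ideal R) ≤ M) hemem
    have h1e : (1 : R) - b * a ∈ M := hle (Ideal.subset_span rfl)
    exact hM.ne_top ((Ideal.eq_top_iff_one M).2 (by simpa using M.add_mem h1e heM))
  obtain ⟨v, hv⟩ := Submodule.mem_span_singleton.mp h1
  rw [smul_eq_mul] at hv
  have hba : b * a = 0 := by
    have key : b * a = v * ((1 - b * a) * (b * a)) := by rw [← mul_assoc, hv, one_mul]
    have hz : (1 - b * a) * (b * a) = 0 := by
      have hidem : (b * a) * (b * a) = b * a := by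
        calc (b*a) * (b*a) = b * (a * b * a) := by noncomm_ring
        _ = b * a := by rw [← hab]
      rw [sub_mul, one_mul, hidem, sub_self]
    rw [hz, mul_zero] at key
    exact key
  have : a = 0 := by
    calc a = a * b * a := hab
    _ = a * (b * a) := by rw [mul_assoc]
    _ = 0 := by rw [hba, mul_zero]
  simpa using this

/-- In a regular ring whose units are all unipotent, `2 = 0`. -/
private lemma two_eq_zero_aux (hreg : ∀ a : R, ∃ b : R, a = a * b * a)
    (hnilu : ∀ v : Rˣ, ∃ n : ℕ, 1 ≤ n ∧ ((v : R) - 1) ^ n = 0) : (2 : R) = 0 := by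
  obtain ⟨n, hn, hneg⟩ := hnilu (-1)
  have hval : ((-1 : Rˣ) : R) - 1 = -2 := by
    simp; norm_num
  rw [hval] at hneg
  have h2n : (2 : R) ^ (2 * n) = 0 := by
    have hneg2 : ((-2 : R)) ^ (2 * n) = 0 := by
      rw [mul_comm, pow_mul, hneg]
      exact zero_pow two_ne_zero
    calc (2 : R) ^ (2 * n) = ((2 : R) ^ 2) ^ n := pow_mul _ _ _
    _ = ((-2 : R) ^ 2) ^ n := by norm_num
    _ = (-2 : R) ^ (2 * n) := (pow_mul _ _ _).symm
    _ = 0 := hneg2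
  obtain ⟨b, hb⟩ := hreg 2
  have he : (2 * b) * (2 * b) = 2 * b := by
    calc (2*b) * (2*b) = (2 * b * 2) * b := by noncomm_ring
    _ = 2 * b := by rw [← hb]
  have hcomm : Commute (2 : R) b := by
    show (2:R) * b = b * 2
    rw [two_mul, mul_two]
  have hepow : (2 * b) ^ (2 * n) = 0 := by
    rw [hcomm.mul_pow, h2n, zero_mul]
  have hz : (2 : R) * b = 0 := by
    have h2n1 : 2 * n = (2 * n - 1) + 1 := by omega
    rw [h2n1, idem_pow_aux he] at hepow
    exact hepow
  calc (2 : R) = 2 * b * 2 := hb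
  _ = 0 := by rw [hz, zero_mul]

/-- In a reduced ring, nilpotent elements are zero. -/
private lemma red_nil_aux (hred : ∀ z : R, z * z = 0 → z = 0) :
    ∀ (k : ℕ) (z : R), z ^ (k+1) = 0 → z = 0 := by
  intro k
  induction k with
  | zero => intro z hz; rwa [pow_one] at hz
  | succ k ih =>
    intro z hz
    apply ih
    apply hred
    have h : z ^ (k+1) * z ^ (k+1) = z ^ (k+1+1) * z ^ k := by
      rw [← pow_add, ← pow_add]; congr 1; omega
    rw [h, hz, zero_mul]

/-- In a reduced ring, idempotents are central. -/
private lemma idem_central_aux (hred : ∀ z : R, z * z = 0 → z = 0) {e : R}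
    (he : e * e = e) (r : R) : e * r = r * e := by
  have h1 : e * r - e * (r * e) = 0 := by
    apply hred
    have key : (r - r * e) * e = 0 := by rw [sub_mul, mul_assoc, he, sub_self]
    calc (e * r - e * (r * e)) * (e * r - e * (r * e))
        = e * (((r - r * e) * e) * (r - r * e)) := by noncomm_ring
    _ = 0 := by rw [key, zero_mul, mul_zero]
  have h2 : r * e - e * (r * e) = 0 := by
    apply hred
    have key : e * (r - e * r) = 0 := by rw [mul_sub, ← mul_assoc, he, sub_self]
    calc (r * e - e * (r * e)) * (r * e - e * (r * e))
        = ((r - e * r) * (e * (r - e * r))) * e := by noncomm_ring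
    _ = 0 := by rw [key, mul_zero, zero_mul]
  rw [sub_eq_zero] at h1 h2
  exact h1.trans h2.symm

/-- A regular ring of characteristic 2 whose units are all unipotent is reduced. -/
private lemma reduced_aux (h2 : ∀ x : R, x + x = 0)
    (hnilu : ∀ v : Rˣ, ∃ n : ℕ, 1 ≤ n ∧ ((v : R) - 1) ^ n = 0)
    (a b : R) (hab : a * b * a = a) (ha : a * a = 0) : a = 0 := by
  obtain ⟨e, hedef⟩ : ∃ e : R, e = a * b := ⟨_, rfl⟩
  obtain ⟨c, hcdef⟩ : ∃ c : R, c = b * e + e * (b * e) := ⟨_, rfl⟩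
  obtain ⟨f, hfdef⟩ : ∃ f : R, f = c * a := ⟨_, rfl⟩
  have he : e * e = e := by
    rw [hedef]
    calc (a*b) * (a*b) = (a * b * a) * b := by noncomm_ring
    _ = a * b := by rw [hab]
  have hea : e * a = a := by rw [hedef]; exact hab
  have hae : a * e = 0 := by
    rw [hedef]
    calc a * (a * b) = (a * a) * b := by noncomm_ring
    _ = 0 := by rw [ha, zero_mul]
  have hac : a * c = e := by
    rw [hcdef]
    calc a * (b * e + e * (b * e)) = (a*b) * e + (a * e) * (b * e) := by noncomm_ring
    _ = e := by rw [← hedef, he, hae, zero_mul, add_zero]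
  have hec : e * c = 0 := by
    rw [hcdef]
    calc e * (b * e + e * (b * e)) = e * (b * e) + (e * e) * (b * e) := by noncomm_ring
    _ = 0 := by rw [he]; exact h2 _
  have hce : c * e = c := by
    rw [hcdef]
    calc (b * e + e * (b * e)) * e = b * (e * e) + e * (b * (e * e)) := by noncomm_ring
    _ = b * e + e * (b * e) := by rw [he]
  have hcc : c * c = 0 := by
    rw [hcdef]
    calc (b * e + e * (b * e)) * (b * e + e * (b * e))
        = (b * ((e * e) * b) * e + b * (e * b) * e) +
          (e * (b * ((e*e) * b)) * e + e * (b * (e * b)) * e) := by noncomm_ring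
    _ = 0 := by rw [he, h2, h2, add_zero]
  have hca : c * a = f := hfdef.symm
  have hff : f * f = f := by
    rw [hfdef]
    calc (c*a) * (c*a) = ((c * e) * a) := by rw [← hac]; noncomm_ring
    _ = c * a := by rw [hce]
  have hef : e * f = 0 := by
    rw [hfdef, ← mul_assoc, hec, zero_mul]
  have hfe : f * e = 0 := by
    rw [hfdef, mul_assoc, hae, mul_zero]
  have haf : a * f = a := by
    rw [hfdef, ← mul_assoc, hac, hea]
  have hcf : c * f = 0 := by
    rw [hfdef, ← mul_assoc, hcc, zero_mul]
  -- the element `m = e + a + c` satisfies `m^4 = m`, and `1 + m` is a unit of order 3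
  obtain ⟨m, hmdef⟩ : ∃ m : R, m = e + a + c := ⟨_, rfl⟩
  have hm2 : m * m = a + c + f := by
    rw [hmdef]
    calc (e+a+c) * (e+a+c)
        = (e*e + e*a + e*c) + (a*e + a*a + a*c) + (c*e + c*a + c*c) := by noncomm_ring
    _ = (e + a + 0) + (0 + 0 + e) + (c + f + 0) := by
          rw [he, hea, hec, hae, ha, hac, hce, hca, hcc]
    _ = (e + e) + (a + c + f) := by abel
    _ = a + c + f := by rw [h2, zero_add]
  have hm3 : m * (m * m) = e + f := by
    rw [hm2, hmdef]
    calc (e+a+c) * (a+c+f)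
        = (e*a + e*c + e*f) + (a*a + a*c + a*f) + (c*a + c*c + c*f) := by noncomm_ring
    _ = (a + 0 + 0) + (0 + e + a) + (f + 0 + 0) := by
          rw [hea, hec, hef, ha, hac, haf, hca, hcc, hcf]
    _ = (a + a) + (e + f) := by abel
    _ = e + f := by rw [h2, zero_add]
  have hsum : m + m * m + m * (m * m) = 0 := by
    rw [hm3, hm2, hmdef]
    calc (e + a + c) + (a + c + f) + (e + f)
        = (e + e) + ((a + a) + ((c + c) + (f + f))) := by abel
    _ = 0 := by rw [h2, h2, h2, h2]; simp
  have hright : (1 + m) * ((1 + m) * (1 + m)) = 1 := by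
    have hsq : (1 + m) * (1 + m) = 1 + m * m := by
      calc (1 + m) * (1 + m) = 1 + (m + m) + m * m := by noncomm_ring
      _ = 1 + m * m := by rw [h2, add_zero]
    rw [hsq]
    calc (1 + m) * (1 + m * m) = 1 + (m + m * m + m * (m * m)) := by noncomm_ring
    _ = 1 := by rw [hsum, add_zero]
  have hleft : ((1 + m) * (1 + m)) * (1 + m) = 1 := by
    have hsq : (1 + m) * (1 + m) = 1 + m * m := by
      calc (1 + m) * (1 + m) = 1 + (m + m) + m * m := by noncomm_ring
      _ = 1 + m * m := by rw [h2, add_zero]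
    rw [hsq]
    calc (1 + m * m) * (1 + m) = 1 + (m + m * m + (m * m) * m) := by noncomm_ring
    _ = 1 + (m + m * m + m * (m * m)) := by rw [mul_assoc]
    _ = 1 := by rw [hsum, add_zero]
  obtain ⟨n, hn, hnil⟩ := hnilu ⟨1 + m, (1 + m) * (1 + m), hright, hleft⟩
  have hmn : m ^ n = 0 := by
    have : ((⟨1 + m, (1 + m) * (1 + m), hright, hleft⟩ : Rˣ) : R) - 1 = m := by
      show (1 + m) - 1 = m
      abel
    rwa [this] at hnil
  have hppow : (e + f) * (e + f) = e + f := by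
    calc (e + f) * (e + f) = (e * e + e * f) + (f * e + f * f) := by noncomm_ring
    _ = e + f := by rw [he, hef, hfe, hff, add_zero, zero_add]
  have h3n0 : m ^ (3 * n) = 0 := by
    have : 3 * n = n + 2 * n := by omega
    rw [this, pow_add, hmn, zero_mul]
  have h3np : m ^ (3 * n) = e + f := by
    have hm3' : m ^ 3 = e + f := by
      have : m ^ 3 = m * (m * m) := by noncomm_ring
      rw [this, hm3]
    obtain ⟨k, hk⟩ := Nat.exists_eq_add_of_le hn
    rw [pow_mul, hm3', hk]
    have : 1 + k = k + 1 := by omega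
    rw [this]
    exact idem_pow_aux hppow k
  have hpzero : e + f = 0 := by rw [← h3np, h3n0]
  have hezero : e = 0 := by
    have : e * (e + f) = e := by
      rw [mul_add, he, hef, add_zero]
    rw [hpzero, mul_zero] at this
    exact this.symm
  rw [← hea, hezero, zero_mul]

/-- A reduced regular ring whose units are all unipotent is Boolean. -/
private lemma idem_aux (hred : ∀ z : R, z * z = 0 → z = 0)
    (hnilu : ∀ v : Rˣ, ∃ n : ℕ, 1 ≤ n ∧ ((v : R) - 1) ^ n = 0)
    (x b : R) (hx : x * b * x = x) : x * x = x := by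
  obtain ⟨e, hedef⟩ : ∃ e : R, e = x * b := ⟨_, rfl⟩
  obtain ⟨f, hfdef⟩ : ∃ f : R, f = b * x := ⟨_, rfl⟩
  have he : e * e = e := by
    rw [hedef]
    calc (x*b) * (x*b) = (x * b * x) * b := by noncomm_ring
    _ = x * b := by rw [hx]
  have hex : e * x = x := by rw [hedef]; exact hx
  have hcen := fun r => idem_central_aux hred he r
  have hxe : x * e = x := by rw [← hcen x]; exact hex
  have hf : f * f = f := by
    rw [hfdef]
    calc (b*x) * (b*x) = b * (x * b * x) := by noncomm_ring
    _ = b * x := by rw [hx]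
  have hfcen := fun r => idem_central_aux hred hf r
  have hxf : x * f = x := by
    rw [hfdef, ← mul_assoc, hx]
  have hfx : f * x = x := by rw [hfcen x]; exact hxf
  have hef : e * f = e := by
    calc e * f = f * e := hcen f
    _ = f * (x * b) := by rw [hedef]
    _ = (f * x) * b := by rw [mul_assoc]
    _ = x * b := by rw [hfx]
    _ = e := hedef.symm
  -- `u = x + 1 - e` is a unit with inverse `v = e*(b*e) + 1 - e`
  have hxebe : x * (e * (b * e)) = e := by
    calc x * (e * (b * e)) = ((x * e) * b) * e := by noncomm_ring
    _ = e * e := by rw [hxe, ← hedef]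
    _ = e := he
  have heebe : e * (e * (b * e)) = e * (b * e) := by
    calc e * (e * (b * e)) = (e * e) * (b * e) := by noncomm_ring
    _ = e * (b * e) := by rw [he]
  have hebex : (e * (b * e)) * x = e := by
    calc (e * (b * e)) * x = e * (b * (e * x)) := by noncomm_ring
    _ = e * (b * x) := by rw [hex]
    _ = e * f := by rw [← hfdef]
    _ = e := hef
  have hebee : (e * (b * e)) * e = e * (b * e) := by
    calc (e * (b * e)) * e = e * (b * (e * e)) := by noncomm_ring
    _ = e * (b * e) := by rw [he]
  have huv : (x + 1 - e) * (e * (b * e) + 1 - e) = 1 := by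
    calc (x + 1 - e) * (e * (b * e) + 1 - e)
        = (x * (e * (b * e)) + x - x * e) + (e * (b * e) + 1 - e)
          - (e * (e * (b * e)) + e - e * e) := by noncomm_ring
    _ = (e + x - x) + (e * (b * e) + 1 - e) - (e * (b * e) + e - e) := by
          rw [hxebe, hxe, heebe, he]
    _ = 1 := by abel
  have hvu : (e * (b * e) + 1 - e) * (x + 1 - e) = 1 := by
    calc (e * (b * e) + 1 - e) * (x + 1 - e)
        = ((e * (b * e)) * x + e * (b * e) - (e * (b * e)) * e)
          + (x + 1 - e) - (e * x + e - e * e) := by noncomm_ring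
    _ = (e + e * (b * e) - e * (b * e)) + (x + 1 - e) - (x + e - e) := by
          rw [hebex, hebee, hex, he]
    _ = 1 := by abel
  obtain ⟨n, hn, hnil⟩ := hnilu ⟨x + 1 - e, e * (b * e) + 1 - e, huv, hvu⟩
  have hnil' : (x - e) ^ n = 0 := by
    have : ((⟨x + 1 - e, e * (b * e) + 1 - e, huv, hvu⟩ : Rˣ) : R) - 1 = x - e := by
      show (x + 1 - e) - 1 = x - e
      abel
    rwa [this] at hnil
  obtain ⟨k, hk⟩ := Nat.exists_eq_add_of_le hn
  have hxe0 : x - e = 0 := by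
    apply red_nil_aux hred k
    rwa [hk, Nat.add_comm] at hnil'
  have hxeq : x = e := sub_eq_zero.mp hxe0
  rw [hxeq, he]

end Auxiliary

theorem regular_isUJsharp_iff_boolean (R : Type*) [Ring R]
    (hreg : ∀ a : R, ∃ b : R, a = a * b * a) :
    IsUJsharp R ↔ ∀ x : R, x ^ 2 = x := by
  constructor
  · intro h x
    have jb := jac_bot_of_reg hreg
    have hnilu : ∀ v : Rˣ, ∃ n : ℕ, 1 ≤ n ∧ ((v : R) - 1) ^ n = 0 := by
      intro v
      obtain ⟨n, hn, hmem⟩ := h v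
      exact ⟨n, hn, by rwa [jb, Ideal.mem_bot] at hmem⟩
    have h2 : (2 : R) = 0 := two_eq_zero_aux hreg hnilu
    have h2' : ∀ y : R, y + y = 0 := fun y => by rw [← two_mul, h2, zero_mul]
    have hred : ∀ z : R, z * z = 0 → z = 0 := fun z hz => by
      obtain ⟨b, hb⟩ := hreg z
      exact reduced_aux h2' hnilu z b hb.symm hz
    obtain ⟨b, hb⟩ := hreg x
    rw [pow_two]
    exact idem_aux hred hnilu x b hb.symm
  · intro hbool u
    have h1 : (u : R) * (u : R) = (u : R) := by rw [← pow_two]; exact hbool _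
    have hu1 : u = 1 := by
      have : u * u = u * 1 := Units.ext (by simpa using h1)
      exact mul_left_cancel this
    refine ⟨1, le_refl 1, ?_⟩
    rw [hu1]
    simp
end

section
/- Let R be a (left) Artinian ring. Then R is a UJ# ring if and only if R is a UU ring, i.e., u - 1 is nilpotent for every unit u of R. -/
/-- In a left Artinian ring, every element of the Jacobson radical is nilpotent. -/
lemma isNilpotent_of_mem_jacobson_bot {R : Type*} [Ring R] [IsArtinianRing R]
    {z : R} (hz : z ∈ Ideal.jacobson (⊥ : Ideal R)) : IsNilpotent z := by
  -- the descending chain of left ideals `R z ⊇ R z² ⊇ ...` stabilizes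
  let f : ℕ →o (Ideal R)ᵒᵈ :=
    ⟨fun k => Submodule.span R {z ^ k}, by
      intro a b hab
      change Submodule.span R {z ^ b} ≤ Submodule.span R {z ^ a}
      rw [Submodule.span_le, Set.singleton_subset_iff]
      obtain ⟨c, rfl⟩ := Nat.exists_eq_add_of_le hab
      rw [add_comm, pow_add]
      exact Submodule.smul_mem _ (z ^ c) (Submodule.mem_span_singleton_self _)⟩
  obtain ⟨n, hn⟩ := IsArtinian.monotone_stabilizes f
  have h1 : z ^ n ∈ Submodule.span R {z ^ (n + 1)} := by
    have := hn (n + 1) (Nat.le_succ n)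
    have : Submodule.span R {z ^ n} = Submodule.span R {z ^ (n + 1)} := this
    rw [← this]
    exact Submodule.mem_span_singleton_self _
  obtain ⟨a, ha⟩ := Submodule.mem_span_singleton.mp h1
  -- `z ^ n = a * z ^ (n+1) = (a * z) * z ^ n`
  have key : (a * z) * z ^ n = z ^ n := by
    rw [mul_assoc, ← pow_succ']
    simpa [smul_eq_mul] using ha
  -- `a * z ∈ J`, so `1 - a * z` has a left inverse
  have hmem : a * z ∈ Ideal.jacobson (⊥ : Ideal R) := Ideal.mul_mem_left _ a hz
  have hsub : (1 - a * z) - 1 ∈ Ideal.jacobson (⊥ : Ideal R) := by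
    simpa using (Ideal.jacobson (⊥ : Ideal R)).neg_mem hmem
  obtain ⟨c, hc⟩ := Ideal.exists_mul_sub_mem_of_sub_one_mem_jacobson _ hsub
  rw [Ideal.mem_bot, sub_eq_zero] at hc
  refine ⟨n, ?_⟩
  calc z ^ n = (c * (1 - a * z)) * z ^ n := by rw [hc, one_mul]
    _ = c * ((1 - a * z) * z ^ n) := by rw [mul_assoc]
    _ = 0 := by rw [sub_mul, one_mul, key, sub_self, mul_zero]

theorem artinian_isUJsharp_iff_isUU (R : Type*) [Ring R] [IsArtinianRing R] :
    IsUJsharp R ↔ ∀ u : Rˣ, IsNilpotent ((u : R) - 1) := by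
  constructor
  · intro h u
    obtain ⟨n, hn1, hn⟩ := h u
    obtain ⟨m, hm⟩ := isNilpotent_of_mem_jacobson_bot hn
    exact ⟨n * m, by rw [pow_mul, hm]⟩
  · intro h u
    obtain ⟨m, hm⟩ := h u
    exact ⟨m + 1, Nat.le_add_left 1 m, by
      rw [pow_succ, hm, zero_mul]; exact (Ideal.jacobson ⊥).zero_mem⟩
end

section
/- Let R be a ring whose Jacobson radical J(R) is nil, i.e., every element of J(R) is nilpotent. Then R is a UJ# ring if and only if R is a UU ring. -/
theorem jacobson_nil_isUJsharp_iff_isUU (R : Type*) [Ring R]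
    (hnil : ∀ x ∈ Ideal.jacobson (⊥ : Ideal R), IsNilpotent x) :
    IsUJsharp R ↔ ∀ u : Rˣ, IsNilpotent ((u : R) - 1) := by
  constructor
  · intro h u
    obtain ⟨n, hn, hmem⟩ := h u
    obtain ⟨m, hm⟩ := hnil _ hmem
    exact ⟨n * m, by rw [pow_mul, hm]⟩
  · intro h u
    obtain ⟨n, hn⟩ := h u
    exact ⟨n + 1, Nat.le_add_left 1 n, by
      rw [pow_succ, hn, zero_mul]
      exact (Ideal.jacobson (⊥ : Ideal R)).zero_mem⟩
end

section
/- Let S be a nontrivial ring and let n ≥ 2 be an integer. Then the ring M_n(S) of n × n matrices over S is not a UJ# ring. -/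
/-!
Take indices `i ≠ j` and let `e = E_ii + E_jj`. The matrix `z` that is `[[0, 1], [1, -1]]` on
the coordinates `i, j` and zero elsewhere satisfies `z² + z = e` and `ze = ez = z`, so `1 + z` is a
unit with inverse `1 - e + z`, while `z` is invertible in the corner ring `eRe` with inverse `z + 1`.
If `z ^ k` were in `J(R)`, then so would be `(z + 1) ^ k z ^ k = e`; but the Jacobson radical
contains no nonzero idempotent.
-/

section Ring

variable {R : Type*} [Ring R]

theorem IsIdempotentElem.eq_zero_of_mem_jacobson {e : R} (he : IsIdempotentElem e)
    (hJ : e ∈ (⊥ : Ideal R).jacobson) : e = 0 := by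
  obtain ⟨w, hw⟩ := Ideal.mem_jacobson_iff.mp hJ (-1)
  have hw : w * (1 - e) = 1 := by
    rw [Ideal.mem_bot] at hw
    rw [← sub_eq_zero, ← hw]
    noncomm_ring
  calc e = w * (1 - e) * e := by rw [hw, one_mul]
    _ = 0 := by rw [mul_assoc, sub_mul, one_mul, he.eq, sub_self, mul_zero]

theorem eq_zero_of_mem_Jsharp_of_mul_eq {z w e : R} (hcomm : Commute w z) (hwz : w * z = e)
    (he : IsIdempotentElem e) (hz : z ∈ Jsharp R) : e = 0 := by
  obtain ⟨k, hk, hzk⟩ := hz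
  apply he.eq_zero_of_mem_jacobson
  have hpow : w ^ k * z ^ k = e := by rw [← hcomm.mul_pow, hwz, he.pow_eq (by omega)]
  exact hpow ▸ Ideal.mul_mem_left _ _ hzk

theorem not_isUJsharp_of_mul_self_add_eq {z e : R} (he0 : e ≠ 0) (hze : z * e = z)
    (hez : e * z = z) (hz : z * z + z = e) : ¬ IsUJsharp R := by
  have he : IsIdempotentElem e := by
    calc e * e = e * (z * z + z) := by rw [hz]
      _ = e := by rw [mul_add, ← mul_assoc, hez, hz]
  let u : Rˣ :=
    { val := 1 + z
      inv := 1 - e + z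
      val_inv := by
        calc (1 + z) * (1 - e + z) = 1 - e + (z * z + z) + (z - z * e) := by noncomm_ring
          _ = 1 := by rw [hz, hze]; abel
      inv_val := by
        calc (1 - e + z) * (1 + z) = 1 - e + (z * z + z) + (z - e * z) := by noncomm_ring
          _ = 1 := by rw [hz, hez]; abel }
  intro hR
  have hzJ : z ∈ Jsharp R := by simpa [u] using hR u
  exact he0 (eq_zero_of_mem_Jsharp_of_mul_eq (Commute.add_left (.refl z) (.one_left z))
    (by rw [add_mul, one_mul, hz]) he hzJ)

end Ring

namespace Matrix

variable {S ι : Type*} [Ring S] [DecidableEq ι]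

def pairIdempotent (i j : ι) : Matrix ι ι S := single i i 1 + single j j 1

/-- The block `[[0, 1], [1, -1]]` on the coordinates `i, j`, a root of `X² + X - 1` in the
corner ring cut out by `pairIdempotent i j`. -/
def pairGolden (i j : ι) : Matrix ι ι S := single i j 1 + single j i 1 - single j j 1

variable {i j : ι}

theorem pairIdempotent_ne_zero [Nontrivial S] (hij : i ≠ j) :
    (pairIdempotent i j : Matrix ι ι S) ≠ 0 := by
  intro h
  simpa [pairIdempotent, single_apply, hij.symm] using congrFun (congrFun h i) i

variable [Fintype ι]

theorem pairGolden_mul_pairIdempotent (hij : i ≠ j) :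
    (pairGolden i j : Matrix ι ι S) * pairIdempotent i j = pairGolden i j := by
  simp [pairGolden, pairIdempotent, add_mul, mul_add, sub_mul, hij, hij.symm]
  abel

theorem pairIdempotent_mul_pairGolden (hij : i ≠ j) :
    (pairIdempotent i j : Matrix ι ι S) * pairGolden i j = pairGolden i j := by
  simp [pairGolden, pairIdempotent, add_mul, mul_add, mul_sub, hij, hij.symm]

theorem pairGolden_mul_self_add (hij : i ≠ j) :
    (pairGolden i j : Matrix ι ι S) * pairGolden i j + pairGolden i j = pairIdempotent i j := by
  simp [pairGolden, pairIdempotent, add_mul, mul_add, sub_mul, mul_sub, hij, hij.symm]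
  abel

end Matrix

open Matrix in
theorem matrix_not_isUJsharp (S : Type*) [Ring S] [Nontrivial S] (n : ℕ) (hn : 2 ≤ n) :
    ¬ IsUJsharp (Matrix (Fin n) (Fin n) S) := by
  have hij : (⟨0, by omega⟩ : Fin n) ≠ ⟨1, by omega⟩ := by simp
  exact not_isUJsharp_of_mul_self_add_eq (pairIdempotent_ne_zero hij)
    (pairGolden_mul_pairIdempotent hij) (pairIdempotent_mul_pairGolden hij)
    (pairGolden_mul_self_add hij)
end

section
/- Every UJ# ring is Dedekind-finite: if R is a UJ# ring and a, b ∈ R satisfy a b = 1, then b a = 1. -/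
/-- The Jacobson radical of `⊥` is closed under right multiplication. -/
lemma jacobson_bot_mul_mem_right {R : Type*} [Ring R] {x : R}
    (hx : x ∈ Ideal.jacobson (⊥ : Ideal R)) (r : R) :
    x * r ∈ Ideal.jacobson (⊥ : Ideal R) := by
  rw [Ideal.mem_jacobson_iff] at hx ⊢
  intro y
  obtain ⟨w, hw⟩ := hx (r * y)
  rw [Ideal.mem_bot, sub_eq_zero] at hw
  refine ⟨1 - y * x * w * r, ?_⟩
  rw [Ideal.mem_bot, sub_eq_zero]
  have key : y * x * (w * (r * y) * x + w) * r = y * x * r := by rw [hw, mul_one]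
  linear_combination (norm := noncomm_ring) -key

theorem isUJsharp_dedekindFinite (R : Type*) [Ring R] (h : IsUJsharp R)
    (a b : R) (hab : a * b = 1) : b * a = 1 := by
  obtain ⟨e, he⟩ : ∃ e : R, e = 1 - b * a := ⟨_, rfl⟩
  have hab' : ∀ x : R, a * (b * x) = x := fun x => by rw [← mul_assoc, hab, one_mul]
  have hae : a * e = 0 := by rw [he]; simp [mul_sub, ← mul_assoc, hab]
  have heb : e * b = 0 := by rw [he]; simp [sub_mul, mul_assoc, hab]
  have hae' : ∀ x : R, a * (e * x) = 0 := fun x => by rw [← mul_assoc, hae, zero_mul]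
  have heb' : ∀ x : R, e * (b * x) = 0 := fun x => by rw [← mul_assoc, heb, zero_mul]
  have hee : e * e = e := by
    rw [he]; simp [sub_mul, mul_sub, mul_assoc, hab']
  have hee' : ∀ x : R, e * (e * x) = e * x := fun x => by rw [← mul_assoc, hee]
  -- the unit
  have hu1 : (1 + e + e * a + b * e) * (1 - e * a - b * e + b * e * a) = 1 := by
    simp only [mul_add, mul_sub, add_mul, sub_mul, mul_assoc, one_mul, mul_one,
      hab', hae, hae', heb, heb', hee, hee', mul_zero, zero_mul]
    noncomm_ring
  have hu2 : (1 - e * a - b * e + b * e * a) * (1 + e + e * a + b * e) = 1 := by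
    simp only [mul_add, mul_sub, add_mul, sub_mul, mul_assoc, one_mul, mul_one,
      hab', hae, hae', heb, heb', hee, hee', mul_zero, zero_mul]
    noncomm_ring
  obtain ⟨z, hzdef⟩ : ∃ z : R, z = e + e * a + b * e := ⟨_, rfl⟩
  obtain ⟨n, hn1, hnJ⟩ := h ⟨1 + e + e * a + b * e, 1 - e * a - b * e + b * e * a, hu1, hu2⟩
  have hzu : ((1 + e + e * a + b * e : R) - 1) = z := by rw [hzdef]; noncomm_ring
  rw [Units.val_mk, hzu] at hnJ
  -- closed form for powers of z
  have hpow : ∀ m : ℕ, z ^ (m + 1) =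
      Nat.fib (m + 2) • e + Nat.fib (m + 1) • (e * a) + Nat.fib (m + 1) • (b * e)
        + Nat.fib m • (b * e * a) := by
    intro m
    induction m with
    | zero => simp [hzdef]
    | succ k ih =>
        rw [pow_succ', ih]
        simp only [hzdef, mul_add, add_mul, mul_smul_comm, smul_mul_assoc, mul_assoc,
          hab', hae, hae', heb, heb', hee, hee', mul_zero, zero_mul, smul_zero]
        simp only [Nat.fib_add_two, add_smul, smul_add, zero_add, add_zero]
        abel
  obtain ⟨m, rfl⟩ : ∃ m, n = m + 1 := ⟨n - 1, by omega⟩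
  set J := Ideal.jacobson (⊥ : Ideal R) with hJ
  -- extract Fibonacci multiples of e
  have hJ1 : (Nat.fib (m + 2) : R) * e ∈ J := by
    have h1 : e * z ^ (m + 1) * e ∈ J :=
      jacobson_bot_mul_mem_right (J.mul_mem_left e hnJ) e
    have h2 : e * z ^ (m + 1) * e = (Nat.fib (m + 2) : R) * e := by
      rw [hpow m]
      simp only [mul_add, add_mul, mul_smul_comm, smul_mul_assoc, mul_assoc,
        hab', hae, hae', heb, heb', hee, hee', mul_zero, zero_mul, smul_zero,
        zero_add, add_zero]
      rw [nsmul_eq_mul]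
    rwa [h2] at h1
  have hJ2 : (Nat.fib (m + 1) : R) * e ∈ J := by
    have h1 : e * z ^ (m + 1) * (b * e) ∈ J :=
      jacobson_bot_mul_mem_right (J.mul_mem_left e hnJ) (b * e)
    have h2 : e * z ^ (m + 1) * (b * e) = (Nat.fib (m + 1) : R) * e := by
      rw [hpow m]
      simp only [mul_add, add_mul, mul_smul_comm, smul_mul_assoc, mul_assoc,
        hab', hae, hae', heb, heb', hee, hee', mul_zero, zero_mul, smul_zero,
        zero_add, add_zero]
      rw [nsmul_eq_mul]
    rwa [h2] at h1
  -- Bezout: adjacent Fibonacci numbers are coprime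
  have hcop : IsCoprime ((Nat.fib (m + 1) : ℤ)) ((Nat.fib (m + 2) : ℤ)) :=
    Nat.isCoprime_iff_coprime.mpr (Nat.fib_coprime_fib_succ (m + 1))
  obtain ⟨x, y, hxy⟩ := hcop
  have hcast : ((x : ℤ) : R) * ((Nat.fib (m + 1) : R)) + ((y : ℤ) : R) * ((Nat.fib (m + 2) : R)) = 1 := by
    have : ((x * (Nat.fib (m + 1) : ℤ) + y * (Nat.fib (m + 2) : ℤ) : ℤ) : R) = ((1 : ℤ) : R) := by
      rw [hxy]
    push_cast at this
    exact_mod_cast this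
  have heJ : e ∈ J := by
    have hmem : ((x : ℤ) : R) * ((Nat.fib (m + 1) : R) * e)
        + ((y : ℤ) : R) * ((Nat.fib (m + 2) : R) * e) ∈ J :=
      J.add_mem (J.mul_mem_left _ hJ2) (J.mul_mem_left _ hJ1)
    have : ((x : ℤ) : R) * ((Nat.fib (m + 1) : R) * e)
        + ((y : ℤ) : R) * ((Nat.fib (m + 2) : R) * e) = e := by
      rw [← mul_assoc, ← mul_assoc, ← add_mul, hcast, one_mul]
    rwa [this] at hmem
  -- e in the radical and idempotent forces e = 0
  obtain ⟨z0, hz0⟩ := Ideal.mem_jacobson_iff.mp heJ (-1)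
  rw [Ideal.mem_bot, sub_eq_zero] at hz0
  have he0 : e = 0 := by
    have : (z0 * (-1) * e + z0) * e = e := by rw [hz0, one_mul]
    calc e = (z0 * (-1) * e + z0) * e := this.symm
      _ = z0 * (-1) * (e * e) + z0 * e := by rw [add_mul, mul_assoc]
      _ = 0 := by rw [hee]; noncomm_ring
  have h1 : (1 : R) - b * a = 0 := by rw [← he, he0]
  linear_combination (norm := noncomm_ring) -h1
end

section
/- Let R be a UJ# ring. Then 2 ∈ J(R), i.e., the element 1 + 1 lies in the Jacobson radical of R. -/
/-! A power of a central element `x` lying in the Jacobson radical forces `x` into it: for each `y`,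
the geometric series for `a = -(y x)` gives `(∑ a ^ i) (1 + y x) = 1 - a ^ n` with
`a ^ n = (-y) ^ n x ^ n` in the radical, so `1 + y x` is left invertible. In a `UJ#` ring the unit
`-1` puts the central element `-2` into `J#(R)`. -/

namespace Ideal

variable {R : Type*} [Ring R]

theorem mem_jacobson_bot_iff_exists_mul_eq_one {x : R} :
    x ∈ jacobson (⊥ : Ideal R) ↔ ∀ y, ∃ z, z * (y * x + 1) = 1 := by
  simp only [mem_jacobson_iff, mem_bot, sub_eq_zero, mul_add, mul_one, mul_assoc]

theorem mem_jacobson_bot_of_pow_mem {x : R} (hx : ∀ y, Commute y x) {n : ℕ}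
    (hxn : x ^ n ∈ jacobson (⊥ : Ideal R)) : x ∈ jacobson (⊥ : Ideal R) := by
  rw [mem_jacobson_bot_iff_exists_mul_eq_one] at hxn ⊢
  intro y
  set a := -(y * x)
  have ha : a ^ n = (-y) ^ n * x ^ n := by
    rw [← (hx y).neg_left.mul_pow, neg_mul]
  obtain ⟨z, hz⟩ := hxn (-(-y) ^ n)
  have hgeom : (∑ i ∈ Finset.range n, a ^ i) * (y * x + 1) = 1 - a ^ n := by
    rw [← geom_sum_mul_neg, sub_neg_eq_add, add_comm]
  refine ⟨z * ∑ i ∈ Finset.range n, a ^ i, ?_⟩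
  rw [mul_assoc, hgeom, ha, ← neg_add_eq_sub, ← neg_mul, hz]

end Ideal

theorem isUJsharp_two_mem_jacobson (R : Type*) [Ring R] (h : IsUJsharp R) :
    (2 : R) ∈ Ideal.jacobson (⊥ : Ideal R) := by
  obtain ⟨n, -, hn⟩ := h (-1)
  have hcentral : ∀ y : R, Commute y (-2) := fun y => (Commute.ofNat_right y 2).neg_right
  rw [Units.val_neg, Units.val_one, ← neg_add', one_add_one_eq_two] at hn
  exact neg_mem_iff.1 (Ideal.mem_jacobson_bot_of_pow_mem hcentral hn)
end
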